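/- arXiv:1003.2508 — 8 statements merged into one kernel-verified Lean document; each statement's English description precedes it below -/
import Mathlib

section
/- Let f : ℝ → ℝ be continuous and even. Then for every nonzero v = (v₁, v₂) ∈ ℝ², the average function satisfies f̄(v) = κ(|v|) · v/|v|, where κ(s) := (2/π) ∫_0^s f(σ) √(1 − σ²/s²) dσ for s > 0. -/
/-!
Write `v = r (cos θ, sin θ)` with `r = |v|`. Shifting the angle by `θ` turns the integrand into
`r f(r cos ψ) sin ψ (sin ψ · u − cos ψ · u⊥)` with `u = v / r`. The `u⊥` part has the form
`h(cos ψ) sin ψ` and integrates to zero, being odd under `ψ ↦ 2π − ψ`. In the `u` part the integrand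
`f(r cos ψ) sin² ψ` is even in `ψ`, and on `[0, π]` it equals `F(cos ψ) sin ψ` with
`F(c) = f(r c) √(1 − c²)`; substituting `c = cos ψ` and folding `[−1, 1]` onto `[0, 1]` by evenness
of `f` gives `κ(r)` after rescaling `σ = r c`.
-/

open Real Set Filter MeasureTheory
open scoped RealInnerProductSpace

noncomputable section

/-- The plane `ℝ²` with the Euclidean norm. -/
abbrev E2 : Type := EuclideanSpace ℝ (Fin 2)

/-- The vector `(a, b) ∈ ℝ²`. -/
def vec2 (a b : ℝ) : E2 := WithLp.toLp 2 ![a, b]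

/-- `κ(s) = (2/π) ∫₀ˢ f(σ) √(1 - σ²/s²) dσ` (equal to `0` at `s = 0`). -/
def kappa (f : ℝ → ℝ) (s : ℝ) : ℝ :=
  (2 / π) * ∫ σ in (0:ℝ)..s, f σ * Real.sqrt (1 - σ ^ 2 / s ^ 2)

/-- The average function `f̄` of `f`. -/
def fbar (f : ℝ → ℝ) (v : E2) : E2 :=
  (1 / (2 * π)) • ∫ φ in (0:ℝ)..(2 * π),
    (f (v 0 * Real.cos φ + v 1 * Real.sin φ) * (-(v 0) * Real.sin φ + v 1 * Real.cos φ)) •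
      vec2 (-Real.sin φ) (Real.cos φ)

/-- The average function `γ̄` of a coupling function `γ`. -/
def gbar (γ : ℝ → ℝ) (v : E2) : E2 :=
  (1 / (2 * π)) • ∫ φ in (0:ℝ)..(2 * π),
    γ (-(v 0) * Real.sin φ + v 1 * Real.cos φ) • vec2 (-Real.sin φ) (Real.cos φ)

/-- `ρ̄(s) = (1/2π) ∫₀^{2π} γ(s sin φ) sin φ dφ`. -/
def rhobar (γ : ℝ → ℝ) (s : ℝ) : ℝ :=
  (1 / (2 * π)) * ∫ φ in (0:ℝ)..(2 * π), γ (s * Real.sin φ) * Real.sin φ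

/-- A class-K function: continuous on `[0, ∞)`, zero at zero, strictly increasing on `[0, ∞)`. -/
def ClassK (α : ℝ → ℝ) : Prop :=
  ContinuousOn α (Set.Ici 0) ∧ α 0 = 0 ∧ StrictMonoOn α (Set.Ici 0)

/-- Condition (L2) for a function `F` with crossing point `s₀ > 0`: `F(s₀) = 0`,
`F` negative on `(0, s₀)`, and `F` positive, nondecreasing and unbounded on `(s₀, ∞)`. -/
def CondL2 (F : ℝ → ℝ) (s₀ : ℝ) : Prop :=
  0 < s₀ ∧ F s₀ = 0 ∧ (∀ s ∈ Set.Ioo (0:ℝ) s₀, F s < 0) ∧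
    (∀ s ∈ Set.Ioi s₀, 0 < F s) ∧ MonotoneOn F (Set.Ioi s₀) ∧
    Filter.Tendsto F Filter.atTop Filter.atTop

/-- The state space `(ℝ²)^m` with the Euclidean norm of `ℝ^{2m}`. -/
abbrev St (m : ℕ) : Type := PiLp 2 (fun _ : Fin m => E2)

theorem exists_eq_norm_smul_vec2_cos_sin (v : E2) : ∃ θ, v = ‖v‖ • vec2 (cos θ) (sin θ) := by
  set z := Complex.orthonormalBasisOneI.repr.symm v
  have hz : ‖v‖ = ‖z‖ := (Complex.orthonormalBasisOneI.repr.symm.norm_map v).symm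
  refine ⟨z.arg, ?_⟩
  ext i
  fin_cases i
  · simp [vec2, hz, Complex.norm_mul_cos_arg, z]
  · simp [vec2, hz, Complex.norm_mul_sin_arg, z]

theorem vec2_neg_sin_cos_add (ψ θ : ℝ) :
    vec2 (-sin (ψ + θ)) (cos (ψ + θ)) =
      (-sin ψ) • vec2 (cos θ) (sin θ) + cos ψ • vec2 (-sin θ) (cos θ) := by
  ext i
  fin_cases i <;> simp [vec2, sin_add, cos_add] <;> ring

theorem integral_comp_cos_mul_sin (h : ℝ → ℝ) : ∫ ψ in 0..2 * π, h (cos ψ) * sin ψ = 0 := by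
  have hrefl := intervalIntegral.integral_comp_sub_left (fun ψ => h (cos ψ) * sin ψ) (2 * π)
    (a := 0) (b := 2 * π)
  simp only [cos_two_pi_sub, sin_two_pi_sub, mul_neg, intervalIntegral.integral_neg,
    sub_self, sub_zero] at hrefl
  linarith

theorem integral_neg_to_eq_two_mul_of_even {f : ℝ → ℝ} (heven : ∀ x, f (-x) = f x) {a : ℝ}
    (hf : IntervalIntegrable f volume 0 a) :
    ∫ x in -a..a, f x = 2 * ∫ x in 0..a, f x := by
  have hneg : ∫ x in -a..0, f x = ∫ x in 0..a, f x := by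
    simpa [heven] using (intervalIntegral.integral_comp_neg (a := 0) (b := a) f).symm
  have hf' : IntervalIntegrable f volume (-a) 0 := by
    simpa [heven] using (IntervalIntegrable.iff_comp_neg (f := f)).mp hf.symm
  rw [← intervalIntegral.integral_add_adjacent_intervals hf' hf, hneg]
  ring

theorem integral_comp_cos_mul_sin_sq {g : ℝ → ℝ} (hg : Continuous g) (heven : ∀ u, g (-u) = g u) :
    ∫ ψ in 0..2 * π, g (cos ψ) * sin ψ ^ 2 = 4 * ∫ u in 0..1, g u * √(1 - u ^ 2) := by
  set G : ℝ → ℝ := fun u => g u * √(1 - u ^ 2)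
  have hG : Continuous G := by fun_prop
  have hq : Continuous fun ψ => g (cos ψ) * sin ψ ^ 2 := by fun_prop
  have hperiodic : Function.Periodic (fun ψ => g (cos ψ) * sin ψ ^ 2) (2 * π) := fun ψ => by
    simp only [cos_add_two_pi, sin_add_two_pi]
  have hhalf : ∫ ψ in 0..π, g (cos ψ) * sin ψ ^ 2 = ∫ u in -1..1, G u := by
    have hsubst := intervalIntegral.integral_comp_mul_deriv (a := 0) (b := π) (g := G)
      (fun ψ _ => hasDerivAt_cos ψ) continuous_sin.neg.continuousOn hG
    have hintegrand : EqOn (fun ψ => (G ∘ cos) ψ * -sin ψ) (fun ψ => -(g (cos ψ) * sin ψ ^ 2))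
        (uIcc 0 π) := fun ψ hψ => by
      rw [uIcc_of_le pi_pos.le] at hψ
      simp only [Function.comp, G, ← sin_eq_sqrt_one_sub_cos_sq hψ.1 hψ.2]
      ring
    rw [intervalIntegral.integral_congr hintegrand, intervalIntegral.integral_neg, cos_zero, cos_pi,
      intervalIntegral.integral_symm (-1) 1] at hsubst
    linarith
  calc ∫ ψ in 0..2 * π, g (cos ψ) * sin ψ ^ 2
      = ∫ ψ in -π..π, g (cos ψ) * sin ψ ^ 2 := by
        simpa [two_mul] using hperiodic.intervalIntegral_add_eq 0 (-π)
    _ = 2 * ∫ u in -1..1, G u := by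
        rw [integral_neg_to_eq_two_mul_of_even (fun ψ => by simp) (hq.intervalIntegrable _ _),
          hhalf]
    _ = 4 * ∫ u in 0..1, G u := by
        rw [integral_neg_to_eq_two_mul_of_even (fun u => by simp [G, heven])
          (hG.intervalIntegrable _ _)]
        ring

theorem kappa_eq_integral_comp_cos_mul_sin_sq {f : ℝ → ℝ} (hf : Continuous f)
    (heven : ∀ s, f (-s) = f s) (r : ℝ) :
    kappa f r = r / (2 * π) * ∫ ψ in 0..2 * π, f (r * cos ψ) * sin ψ ^ 2 := by
  rcases eq_or_ne r 0 with rfl | hr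
  · simp [kappa]
  have hscale : ∫ σ in 0..r, f σ * √(1 - σ ^ 2 / r ^ 2) =
      r * ∫ u in 0..1, f (r * u) * √(1 - u ^ 2) := by
    have h := intervalIntegral.integral_comp_mul_left
      (fun σ => f σ * √(1 - σ ^ 2 / r ^ 2)) hr (a := 0) (b := 1)
    simp only [mul_pow, mul_div_cancel_left₀ _ (pow_ne_zero 2 hr), mul_zero, mul_one,
      smul_eq_mul] at h
    rw [h, mul_inv_cancel_left₀ hr]
  rw [kappa, hscale, integral_comp_cos_mul_sin_sq (g := fun u => f (r * u)) (by fun_prop)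
    (fun u => by simp only [mul_neg, heven])]
  field_simp
  ring

theorem fbar_smul_vec2_cos_sin {f : ℝ → ℝ} (hf : Continuous f) (heven : ∀ s, f (-s) = f s)
    (r θ : ℝ) : fbar f (r • vec2 (cos θ) (sin θ)) = kappa f r • vec2 (cos θ) (sin θ) := by
  set u := vec2 (cos θ) (sin θ)
  set u' := vec2 (-sin θ) (cos θ)
  set F : ℝ → E2 := fun φ => (f (r * cos θ * cos φ + r * sin θ * sin φ) *
      (-(r * cos θ) * sin φ + r * sin θ * cos φ)) • vec2 (-sin φ) (cos φ)
  have hfbar : fbar f (r • u) = (1 / (2 * π)) • ∫ φ in 0..2 * π, F φ := by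
    simp [fbar, F, u, vec2]
  have hperiodic : Function.Periodic F (2 * π) := fun φ => by
    simp only [F, cos_add_two_pi, sin_add_two_pi]
  have hrotate : ∀ ψ, F (ψ + θ) =
      (r * (f (r * cos ψ) * sin ψ ^ 2)) • u - (r * (f (r * cos ψ) * cos ψ * sin ψ)) • u' := by
    intro ψ
    have hcos : r * cos θ * cos (ψ + θ) + r * sin θ * sin (ψ + θ) = r * cos ψ := by
      rw [cos_add, sin_add]; linear_combination r * cos ψ * sin_sq_add_cos_sq θ
    have hsin : -(r * cos θ) * sin (ψ + θ) + r * sin θ * cos (ψ + θ) = -(r * sin ψ) := by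
      rw [cos_add, sin_add]; linear_combination -(r * sin ψ) * sin_sq_add_cos_sq θ
    simp only [F, hcos, hsin, vec2_neg_sin_cos_add]
    module
  have hshift : ∫ φ in 0..2 * π, F φ = ∫ ψ in 0..2 * π, F (ψ + θ) := by
    rw [intervalIntegral.integral_comp_add_right, zero_add, add_comm,
      hperiodic.intervalIntegral_add_eq θ 0, zero_add]
  rw [hfbar, hshift, funext hrotate, intervalIntegral.integral_sub,
    intervalIntegral.integral_smul_const, intervalIntegral.integral_smul_const,
    intervalIntegral.integral_const_mul, intervalIntegral.integral_const_mul,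
    integral_comp_cos_mul_sin (fun c => f (r * c) * c),
    kappa_eq_integral_comp_cos_mul_sin_sq hf heven]
  · module
  all_goals exact (by fun_prop : Continuous _).intervalIntegrable _ _

/-- for continuous even `f` and nonzero `v ∈ ℝ²`,
`f̄(v) = κ(|v|) · v / |v|`. -/
theorem fbar_eq_kappa_smul (f : ℝ → ℝ) (hf : Continuous f) (hfe : ∀ s : ℝ, f (-s) = f s)
    (v : E2) (hv : v ≠ 0) :
    fbar f v = (kappa f ‖v‖ / ‖v‖) • v := by
  obtain ⟨θ, hθ⟩ := exists_eq_norm_smul_vec2_cos_sin v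
  have hr : ‖v‖ ≠ 0 := norm_ne_zero_iff.mpr hv
  set r := ‖v‖
  rw [hθ, fbar_smul_vec2_cos_sin hf hfe, smul_smul, div_mul_cancel₀ _ hr]
end
end

section
/- Let f : ℝ → ℝ be continuous and even, and let r > 0. Then (1/2π) ∫_{−π}^{π} f(r cos φ) · r sin²φ dφ = (2/π) ∫_0^r f(σ) √(1 − σ²/r²) dσ. -/
open Real Set Filter MeasureTheory
open scoped RealInnerProductSpace

noncomputable section

/-! The integrand in `φ` is even, so the integral over `[-π, π]` is twice that over `[0, π]`.
There `sin φ ≥ 0`, hence `r sin φ = r √(1 - cos² φ)`, and the substitution `σ = r cos φ` turns it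
into `∫_{-r}^{r} f(σ) √(1 - σ²/r²) dσ`, which is twice the integral over `[0, r]` because `f` is
even. -/

theorem integral_neg_self_eq_two_smul_of_even {E : Type*} [NormedAddCommGroup E]
    [NormedSpace ℝ E] {g : ℝ → E} (hg : ∀ x, g (-x) = g x) {a : ℝ}
    (hint : IntervalIntegrable g volume (-a) a) :
    ∫ x in -a..a, g x = (2 : ℝ) • ∫ x in 0..a, g x := by
  have hreflect : ∫ x in -a..0, g x = ∫ x in 0..a, g x := by
    simpa only [hg, neg_zero] using (intervalIntegral.integral_comp_neg (a := 0) (b := a) g).symm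
  have hzero : 0 ∈ uIcc (-a) a := by simp [mem_uIcc, le_total]
  rw [← intervalIntegral.integral_add_adjacent_intervals
    (hint.mono_set (uIcc_subset_uIcc left_mem_uIcc hzero))
    (hint.mono_set (uIcc_subset_uIcc hzero right_mem_uIcc)), hreflect, two_smul]

theorem integral_comp_mul_cos_mul_sin {g : ℝ → ℝ} (hg : Continuous g) (r : ℝ) :
    ∫ φ in 0..π, g (r * cos φ) * (r * sin φ) = ∫ σ in -r..r, g σ := by
  have hderiv : ∀ φ ∈ uIcc 0 π, HasDerivAt (fun φ ↦ r * cos φ) (-(r * sin φ)) φ := fun φ _ ↦ by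
    simpa using (hasDerivAt_cos φ).const_mul r
  have hsubst := intervalIntegral.integral_comp_mul_deriv hderiv (by fun_prop) hg
  simp only [Function.comp_def, cos_zero, cos_pi, mul_one, mul_neg, intervalIntegral.integral_neg]
    at hsubst
  rw [intervalIntegral.integral_symm r, ← hsubst, neg_neg]

theorem mul_sin_mul_sqrt_one_sub_mul_cos_sq_div_sq {φ : ℝ} (hφ : 0 ≤ sin φ) (r : ℝ) :
    r * sin φ * √(1 - (r * cos φ) ^ 2 / r ^ 2) = r * sin φ ^ 2 := by
  rcases eq_or_ne r 0 with rfl | hr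
  · simp
  have hsin_sq : 1 - (r * cos φ) ^ 2 / r ^ 2 = sin φ ^ 2 := by
    rw [mul_pow, mul_div_cancel_left₀ _ (pow_ne_zero 2 hr), ← sin_sq_add_cos_sq φ]
    ring
  rw [hsin_sq, sqrt_sq hφ]
  ring

theorem avg_integral_eq_general (f : ℝ → ℝ) (hf : Continuous f) (hfe : ∀ s : ℝ, f (-s) = f s)
    (r : ℝ) :
    (1 / (2 * π)) * ∫ φ in (-π)..π, f (r * Real.cos φ) * (r * Real.sin φ ^ 2) =
      (2 / π) * ∫ σ in (0:ℝ)..r, f σ * Real.sqrt (1 - σ ^ 2 / r ^ 2) := by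
  set g : ℝ → ℝ := fun σ ↦ f σ * √(1 - σ ^ 2 / r ^ 2)
  have hg : Continuous g := by fun_prop
  have hcos_sin : ∫ φ in 0..π, f (r * cos φ) * (r * sin φ ^ 2) =
      ∫ φ in 0..π, g (r * cos φ) * (r * sin φ) := by
    refine intervalIntegral.integral_congr fun φ hφ ↦ ?_
    rw [uIcc_of_le pi_pos.le] at hφ
    simp only [g, mul_assoc, ← mul_sin_mul_sqrt_one_sub_mul_cos_sq_div_sq
      (sin_nonneg_of_nonneg_of_le_pi hφ.1 hφ.2) r]
    ring
  have hφ_even := integral_neg_self_eq_two_smul_of_even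
    (g := fun φ ↦ f (r * cos φ) * (r * sin φ ^ 2)) (a := π) (by simp)
    (Continuous.intervalIntegrable (by fun_prop) _ _)
  have hσ_even := integral_neg_self_eq_two_smul_of_even (g := g) (a := r)
    (by simp [g, hfe]) (hg.intervalIntegrable _ _)
  rw [hφ_even, smul_eq_mul, hcos_sin, integral_comp_mul_cos_mul_sin hg, hσ_even, smul_eq_mul]
  field_simp

/-- `(1/2π) ∫_{-π}^{π} f(r cos φ) r sin²φ dφ
  = (2/π) ∫₀^r f(σ) √(1 - σ²/r²) dσ` for continuous even `f` and `r > 0`. -/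
theorem avg_integral_eq (f : ℝ → ℝ) (hf : Continuous f) (hfe : ∀ s : ℝ, f (-s) = f s)
    (r : ℝ) (hr : 0 < r) :
    (1 / (2 * π)) * ∫ φ in (-π)..π, f (r * Real.cos φ) * (r * Real.sin φ ^ 2) =
      (2 / π) * ∫ σ in (0:ℝ)..r, f σ * Real.sqrt (1 - σ ^ 2 / r ^ 2) :=
  avg_integral_eq_general f hf hfe r
end
end

section
/- The function κ satisfies condition (L2): there exists ρ > 0 such that κ(ρ) = 0, κ is negative on (0, ρ), and κ is positive, nondecreasing, and unbounded on (ρ, ∞). -/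
/-!
Integrating by parts against `√(1 - x²/s²)`, whose derivative is `-w_s` with
`w_s(x) = x / (s² √(1 - x²/s²))` a probability density on `[0, s]`, gives
`κ(s) = (2/π) ∫₀ˢ F w_s` for `F = ∫₀ f`. So `κ(s) < 0` for `0 < s ≤ s₀`, as `F < 0` on `(0, s₀)`.
For `s₀ ≤ a < b` we have `w_b < w_a` on `(0, a)`, `F ≤ F(a)` on `(0, a]` and `F ≥ F(a)` on `[a, b]`;
hence both integrands in
`κ(b) - κ(a) = (2/π) (∫₀ᵃ (F - F(a)) (w_b - w_a) + ∫ₐᵇ (F - F(a)) w_b)`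
are nonnegative, the first one strictly on `(0, s₀)`. Since the `w_s`-mass of `[s/2, s]` is
`√3/2`, `κ(s)` grows at least like `F(s/2)`. Continuity and the intermediate value theorem then
give the zero `ρ` of `κ`.
-/

open Real Set Filter MeasureTheory
open scoped RealInnerProductSpace

noncomputable section

def kappaWeight (s x : ℝ) : ℝ := x / (s ^ 2 * √(1 - x ^ 2 / s ^ 2))

lemma hasDerivAt_sqrt_one_sub_sq_div_sq {s x : ℝ} (h : x ^ 2 < s ^ 2) :
    HasDerivAt (fun x => √(1 - x ^ 2 / s ^ 2)) (-kappaWeight s x) x := by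
  have hs : 0 < s ^ 2 := (sq_nonneg x).trans_lt h
  have hpos : 0 < 1 - x ^ 2 / s ^ 2 := by rw [sub_pos, div_lt_one hs]; exact h
  have h1 : HasDerivAt (fun x => 1 - x ^ 2 / s ^ 2) (-(2 * x / s ^ 2)) x := by
    simpa using ((hasDerivAt_pow 2 x).div_const (s ^ 2)).const_sub 1
  refine ((Real.hasDerivAt_sqrt hpos.ne').comp x h1).congr_deriv ?_
  have := (Real.sqrt_pos.2 hpos).ne'
  simp only [kappaWeight]
  field_simp

lemma kappaWeight_nonneg (s : ℝ) {x : ℝ} (hx : 0 ≤ x) : 0 ≤ kappaWeight s x := by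
  unfold kappaWeight; positivity

lemma kappaWeight_pos {s x : ℝ} (hx : 0 < x) (hxs : x < s) : 0 < kappaWeight s x := by
  have hs : 0 < s := hx.trans hxs
  have : 0 < 1 - x ^ 2 / s ^ 2 := by
    rw [sub_pos, div_lt_one (by positivity)]; nlinarith
  unfold kappaWeight; positivity

lemma kappaWeight_lt_kappaWeight {a b x : ℝ} (hx : 0 < x) (hxa : x < a) (hab : a < b) :
    kappaWeight b x < kappaWeight a x := by
  have hsq : ∀ s, 0 < s → s ^ 2 * √(1 - x ^ 2 / s ^ 2) = s * √(s ^ 2 - x ^ 2) := by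
    intro s hs
    rw [show s ^ 2 - x ^ 2 = s ^ 2 * (1 - x ^ 2 / s ^ 2) by field_simp,
      Real.sqrt_mul (sq_nonneg s), Real.sqrt_sq hs.le]
    ring
  have ha : 0 < a := hx.trans hxa
  unfold kappaWeight
  rw [hsq a ha, hsq b (ha.trans hab)]
  apply div_lt_div_of_pos_left hx (mul_pos ha (Real.sqrt_pos.2 (by nlinarith)))
  gcongr
  nlinarith

lemma integral_kappaWeight {s y : ℝ} (hs : 0 < s) (hy : 0 ≤ y) (hys : y ≤ s) :
    IntervalIntegrable (kappaWeight s) volume y s ∧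
      ∫ x in y..s, kappaWeight s x = √(1 - y ^ 2 / s ^ 2) := by
  have hcont : ContinuousOn (fun x => -√(1 - x ^ 2 / s ^ 2)) (Icc y s) := by fun_prop
  have hderiv : ∀ x ∈ Ioo y s, HasDerivAt (fun x => -√(1 - x ^ 2 / s ^ 2)) (kappaWeight s x) x :=
    fun x hx => by
      simpa using (hasDerivAt_sqrt_one_sub_sq_div_sq (by nlinarith [hx.1, hx.2])).fun_neg
  have hint : IntervalIntegrable (kappaWeight s) volume y s :=
    (intervalIntegrable_iff_integrableOn_Ioc_of_le hys).2 <|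
      intervalIntegral.integrableOn_deriv_of_nonneg hcont hderiv
        fun x hx => kappaWeight_nonneg s (hy.trans hx.1.le)
  refine ⟨hint, ?_⟩
  rw [intervalIntegral.integral_eq_sub_of_hasDerivAt_of_le hys hcont hderiv hint,
    div_self (by positivity)]
  simp

def kappaMean (F : ℝ → ℝ) (s : ℝ) : ℝ := ∫ x in 0..s, F x * kappaWeight s x

lemma intervalIntegrable_mul_kappaWeight {g : ℝ → ℝ} (hg : Continuous g) {s : ℝ} (hs : 0 < s) :
    IntervalIntegrable (fun x => g x * kappaWeight s x) volume 0 s :=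
  (integral_kappaWeight hs le_rfl hs.le).1.continuousOn_mul hg.continuousOn

lemma integral_mul_sqrt_eq_kappaMean {f : ℝ → ℝ} (hf : Continuous f) {s : ℝ} (hs : 0 < s) :
    ∫ x in 0..s, f x * √(1 - x ^ 2 / s ^ 2) = kappaMean (fun x => ∫ t in 0..x, f t) s := by
  have hF : Continuous fun x => ∫ t in 0..x, f t :=
    intervalIntegral.continuous_primitive (fun _ _ => hf.intervalIntegrable _ _) 0
  have hparts := intervalIntegral.integral_mul_deriv_eq_deriv_mul_of_hasDerivAt
    (u := fun x => ∫ t in 0..x, f t) (v := fun x => √(1 - x ^ 2 / s ^ 2))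
    (v' := fun x => -kappaWeight s x) hF.continuousOn (by fun_prop)
    (fun x _ => (hf.integral_hasStrictDerivAt 0 x).hasDerivAt)
    (fun x hx => by
      rw [min_eq_left hs.le, max_eq_right hs.le] at hx
      exact hasDerivAt_sqrt_one_sub_sq_div_sq (by nlinarith [hx.1, hx.2]))
    (hf.intervalIntegrable _ _) (integral_kappaWeight hs le_rfl hs.le).1.neg
  simp only [mul_neg, intervalIntegral.integral_neg, intervalIntegral.integral_same,
    div_self (pow_ne_zero 2 hs.ne'), sub_self, Real.sqrt_zero, mul_zero, zero_mul] at hparts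
  unfold kappaMean
  linarith

lemma kappa_eq_mul_integral (f : ℝ → ℝ) (s : ℝ) :
    kappa f s = 2 / π * (s * ∫ u in 0..1, f (s * u) * √(1 - u ^ 2)) := by
  rcases eq_or_ne s 0 with rfl | hs
  · simp [kappa]
  have hscale : ∀ u : ℝ, f (s * u) * √(1 - u ^ 2) = f (s * u) * √(1 - (s * u) ^ 2 / s ^ 2) :=
    fun u => by rw [mul_pow, mul_div_cancel_left₀ _ (pow_ne_zero 2 hs)]
  simp_rw [hscale, intervalIntegral.integral_comp_mul_left
    (fun σ => f σ * √(1 - σ ^ 2 / s ^ 2)) hs, smul_eq_mul, mul_zero, mul_one,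
    mul_inv_cancel_left₀ hs, kappa]

lemma continuous_kappa {f : ℝ → ℝ} (hf : Continuous f) : Continuous (kappa f) := by
  simp_rw [funext (kappa_eq_mul_integral f)]
  fun_prop

lemma kappa_eq_kappaMean {f : ℝ → ℝ} (hf : Continuous f) {s : ℝ} (hs : 0 < s) :
    kappa f s = 2 / π * kappaMean (fun x => ∫ t in 0..x, f t) s := by
  rw [kappa, integral_mul_sqrt_eq_kappaMean hf hs]

lemma kappaMean_sub_const {F : ℝ → ℝ} (hF : Continuous F) {s : ℝ} (hs : 0 < s) (c : ℝ) :
    kappaMean F s - c = ∫ x in 0..s, (F x - c) * kappaWeight s x := by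
  obtain ⟨hint, hmass⟩ := integral_kappaWeight hs le_rfl hs.le
  simp_rw [sub_mul]
  rw [intervalIntegral.integral_sub (intervalIntegrable_mul_kappaWeight hF hs) (hint.const_mul c),
    intervalIntegral.integral_const_mul, hmass]
  simp [kappaMean]

lemma kappaMean_neg {F : ℝ → ℝ} (hF : Continuous F) {s : ℝ} (hs : 0 < s)
    (hneg : ∀ x ∈ Ioo 0 s, F x < 0) : kappaMean F s < 0 := by
  have : 0 < ∫ x in 0..s, -(F x * kappaWeight s x) :=
    intervalIntegral.intervalIntegral_pos_of_pos_on (intervalIntegrable_mul_kappaWeight hF hs).neg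
      (fun x hx => neg_pos.2 (mul_neg_of_neg_of_pos (hneg x hx) (kappaWeight_pos hx.1 hx.2))) hs
  rw [intervalIntegral.integral_neg] at this
  exact neg_pos.1 this

lemma kappaMean_sub_kappaMean {F : ℝ → ℝ} (hF : Continuous F) {a b : ℝ} (ha : 0 < a)
    (hab : a ≤ b) :
    kappaMean F b - kappaMean F a =
      (∫ x in 0..a, (F x - F a) * (kappaWeight b x - kappaWeight a x)) +
        ∫ x in a..b, (F x - F a) * kappaWeight b x := by
  have hb := ha.trans_le hab
  have hG : Continuous fun x => F x - F a := by fun_prop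
  have hIb := intervalIntegrable_mul_kappaWeight hG hb
  have hIb₁ := hIb.mono_set (uIcc_subset_uIcc left_mem_uIcc (mem_uIcc_of_le ha.le hab))
  have hIb₂ := hIb.mono_set (uIcc_subset_uIcc (mem_uIcc_of_le ha.le hab) right_mem_uIcc)
  rw [← sub_sub_sub_cancel_right _ _ (F a), kappaMean_sub_const hF hb, kappaMean_sub_const hF ha,
    ← intervalIntegral.integral_add_adjacent_intervals hIb₁ hIb₂]
  simp_rw [mul_sub]
  rw [intervalIntegral.integral_sub hIb₁ (intervalIntegrable_mul_kappaWeight hG ha)]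
  ring

lemma CondL2.monotoneOn_Ici {F : ℝ → ℝ} {s₀ : ℝ} (h : CondL2 F s₀) : MonotoneOn F (Ici s₀) := by
  obtain ⟨-, h0, -, hpos, hmono, -⟩ := h
  intro x hx y hy hxy
  rcases (mem_Ici.1 hx).eq_or_lt with rfl | hx
  · rcases (mem_Ici.1 hy).eq_or_lt with rfl | hy
    exacts [le_rfl, h0 ▸ (hpos y hy).le]
  · exact hmono hx (hx.trans_le hxy) hxy

lemma CondL2.nonneg_of_le {F : ℝ → ℝ} {s₀ a : ℝ} (h : CondL2 F s₀) (ha : s₀ ≤ a) : 0 ≤ F a :=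
  h.2.1 ▸ h.monotoneOn_Ici self_mem_Ici ha ha

lemma CondL2.le_of_mem_Ioc {F : ℝ → ℝ} {s₀ a x : ℝ} (h : CondL2 F s₀) (ha : s₀ ≤ a)
    (hx : x ∈ Ioc 0 a) : F x ≤ F a := by
  rcases lt_or_ge x s₀ with hxs | hxs
  · exact (h.2.2.1 x ⟨hx.1, hxs⟩).le.trans (h.nonneg_of_le ha)
  · exact h.monotoneOn_Ici hxs (hxs.trans hx.2) hx.2

lemma integral_sub_mul_kappaWeight_sub_pos {F : ℝ → ℝ} (hF : Continuous F) {s₀ a b : ℝ}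
    (h : CondL2 F s₀) (ha : s₀ ≤ a) (hab : a < b) :
    0 < ∫ x in 0..a, (F x - F a) * (kappaWeight b x - kappaWeight a x) := by
  have ha₀ : 0 < a := h.1.trans_le ha
  have hint : IntervalIntegrable
      (fun x => (F x - F a) * (kappaWeight b x - kappaWeight a x)) volume 0 a := by
    have hG : Continuous fun x => F x - F a := by fun_prop
    simpa only [mul_sub] using ((intervalIntegrable_mul_kappaWeight hG (ha₀.trans hab)).mono_set
      (uIcc_subset_uIcc left_mem_uIcc (mem_uIcc_of_le ha₀.le hab.le))).sub
      (intervalIntegrable_mul_kappaWeight hG ha₀)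
  have hs₀ : s₀ ∈ uIcc 0 a := mem_uIcc_of_le h.1.le ha
  have hinner : 0 < ∫ x in 0..s₀, (F x - F a) * (kappaWeight b x - kappaWeight a x) :=
    intervalIntegral.intervalIntegral_pos_of_pos_on
      (hint.mono_set (uIcc_subset_uIcc left_mem_uIcc hs₀))
      (fun x hx => mul_pos_of_neg_of_neg (sub_neg.2 ((h.2.2.1 x hx).trans_le (h.nonneg_of_le ha)))
        (sub_neg.2 (kappaWeight_lt_kappaWeight hx.1 (hx.2.trans_le ha) hab))) h.1
  have houter : 0 ≤ ∫ x in s₀..a, (F x - F a) * (kappaWeight b x - kappaWeight a x) :=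
    intervalIntegral.integral_nonneg ha fun x hx => by
      rcases hx.2.eq_or_lt with rfl | hxa
      · simp
      have hx₀ : 0 < x := h.1.trans_le hx.1
      exact mul_nonneg_of_nonpos_of_nonpos (sub_nonpos.2 (h.le_of_mem_Ioc ha ⟨hx₀, hxa.le⟩))
        (sub_nonpos.2 (kappaWeight_lt_kappaWeight hx₀ hxa hab).le)
  rw [← intervalIntegral.integral_add_adjacent_intervals
    (hint.mono_set (uIcc_subset_uIcc left_mem_uIcc hs₀))
    (hint.mono_set (uIcc_subset_uIcc hs₀ right_mem_uIcc))]
  linarith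

lemma kappaMean_strictMonoOn {F : ℝ → ℝ} (hF : Continuous F) {s₀ : ℝ} (h : CondL2 F s₀) :
    StrictMonoOn (kappaMean F) (Ici s₀) := by
  intro a ha b hb hab
  have ha₀ : 0 < a := h.1.trans_le ha
  have hfar : 0 ≤ ∫ x in a..b, (F x - F a) * kappaWeight b x :=
    intervalIntegral.integral_nonneg hab.le fun x hx =>
      mul_nonneg (sub_nonneg.2 (h.monotoneOn_Ici ha (ha.trans hx.1) hx.1))
        (kappaWeight_nonneg b (ha₀.le.trans hx.1))
  rw [← sub_pos, kappaMean_sub_kappaMean hF ha₀ hab.le]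
  linarith [integral_sub_mul_kappaWeight_sub_pos hF h ha hab]

lemma le_kappaMean {F : ℝ → ℝ} (hF : Continuous F) {s y m c : ℝ} (hs : 0 < s) (hy : 0 ≤ y)
    (hys : y ≤ s) (hm : ∀ x ∈ Icc 0 y, m ≤ F x) (hc : ∀ x ∈ Icc y s, c ≤ F x) :
    m + (c - m) * √(1 - y ^ 2 / s ^ 2) ≤ kappaMean F s := by
  have hG : Continuous fun x => F x - m := by fun_prop
  have hy' : y ∈ uIcc 0 s := mem_uIcc_of_le hy hys
  have hint := intervalIntegrable_mul_kappaWeight hG hs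
  have hint₁ := hint.mono_set (uIcc_subset_uIcc left_mem_uIcc hy')
  have hint₂ := hint.mono_set (uIcc_subset_uIcc hy' right_mem_uIcc)
  obtain ⟨hwint, hwmass⟩ := integral_kappaWeight hs hy hys
  have hhead : 0 ≤ ∫ x in 0..y, (F x - m) * kappaWeight s x :=
    intervalIntegral.integral_nonneg hy fun x hx =>
      mul_nonneg (sub_nonneg.2 (hm x hx)) (kappaWeight_nonneg s hx.1)
  have htail : ∫ x in y..s, (c - m) * kappaWeight s x ≤ ∫ x in y..s, (F x - m) * kappaWeight s x :=
    intervalIntegral.integral_mono_on hys (hwint.const_mul _) hint₂ fun x hx =>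
        mul_le_mul_of_nonneg_right (by linarith [hc x hx]) (kappaWeight_nonneg s (hy.trans hx.1))
  rw [intervalIntegral.integral_const_mul, hwmass] at htail
  have hsplit := kappaMean_sub_const hF hs m
  rw [← intervalIntegral.integral_add_adjacent_intervals hint₁ hint₂] at hsplit
  linarith

lemma tendsto_kappaMean_atTop {F : ℝ → ℝ} (hF : Continuous F) {s₀ : ℝ} (h : CondL2 F s₀) :
    Tendsto (kappaMean F) atTop atTop := by
  obtain ⟨m, hm⟩ := isCompact_Icc.bddBelow_image (hF.continuousOn : ContinuousOn F (Icc 0 s₀))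
  have hbelow : ∀ x, 0 ≤ x → min m 0 ≤ F x := fun x hx => by
    rcases le_or_gt x s₀ with hxs | hxs
    · exact (min_le_left _ _).trans (hm ⟨x, ⟨hx, hxs⟩, rfl⟩)
    · exact (min_le_right _ _).trans (h.2.2.2.1 x hxs).le
  have hbound : ∀ s, 2 * s₀ ≤ s →
      min m 0 + (F (s / 2) - min m 0) * √(1 - 1 / 4) ≤ kappaMean F s := fun s hs => by
    have hs₀ : 0 < s := by linarith [h.1]
    have key := le_kappaMean hF hs₀ (y := s / 2) (by positivity) (by linarith)
      (fun x hx => hbelow x hx.1)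
      (fun x hx => h.monotoneOn_Ici (by simp; linarith) (by simp; linarith [hx.1]) hx.1)
    rwa [show (s / 2) ^ 2 / s ^ 2 = 1 / 4 by field_simp; norm_num] at key
  refine tendsto_atTop_mono' atTop (eventually_atTop.2 ⟨2 * s₀, hbound⟩) ?_
  refine tendsto_atTop_add_const_left _ _ (Tendsto.atTop_mul_const (by norm_num) ?_)
  exact tendsto_atTop_add_const_right _ _ (h.2.2.2.2.2.comp (tendsto_id.atTop_div_const two_pos))

lemma exists_condL2_of_strictMonoOn {g : ℝ → ℝ} {s₀ : ℝ} (hs₀ : 0 < s₀)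
    (hg : ContinuousOn g (Ici s₀)) (hneg : ∀ s ∈ Ioc 0 s₀, g s < 0)
    (hmono : StrictMonoOn g (Ici s₀)) (htop : Tendsto g atTop atTop) : ∃ ρ, CondL2 g ρ := by
  obtain ⟨s₁, hs₁, hg₁⟩ := ((eventually_gt_atTop s₀).and (htop.eventually_gt_atTop 0)).exists
  obtain ⟨ρ, hρ, hgρ⟩ := intermediate_value_Ioo hs₁.le (hg.mono Icc_subset_Ici_self)
    ⟨hneg s₀ ⟨hs₀, le_rfl⟩, hg₁⟩
  have hρ' : ρ ∈ Ici s₀ := hρ.1.le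
  refine ⟨ρ, hs₀.trans hρ.1, hgρ, fun s hs => ?_, fun s hs => ?_,
    hmono.monotoneOn.mono (Ioi_subset_Ici hρ.1.le), htop⟩
  · rcases le_or_gt s s₀ with hss | hss
    · exact hneg s ⟨hs.1, hss⟩
    · exact hgρ ▸ hmono hss.le hρ' hs.2
  · exact hgρ ▸ hmono hρ' (hρ'.trans (mem_Ioi.1 hs).le) hs

theorem kappa_condL2_general (f : ℝ → ℝ) (hflip : LocallyLipschitz f)
    (s₀ : ℝ) (hF : CondL2 (fun s => ∫ σ in (0:ℝ)..s, f σ) s₀) :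
    ∃ ρ : ℝ, CondL2 (kappa f) ρ := by
  have hf := hflip.continuous
  have hFc : Continuous fun s => ∫ σ in (0:ℝ)..s, f σ :=
    intervalIntegral.continuous_primitive (fun _ _ => hf.intervalIntegrable _ _) 0
  have hπ : 0 < 2 / π := by positivity
  refine exists_condL2_of_strictMonoOn hF.1 (continuous_kappa hf).continuousOn
    (fun s hs => ?_) (fun a ha b hb hab => ?_) ?_
  · rw [kappa_eq_kappaMean hf hs.1]
    exact mul_neg_of_pos_of_neg hπ
      (kappaMean_neg hFc hs.1 fun x hx => hF.2.2.1 x ⟨hx.1, hx.2.trans_le hs.2⟩)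
  · rw [kappa_eq_kappaMean hf (hF.1.trans_le ha), kappa_eq_kappaMean hf (hF.1.trans_le hb)]
    exact mul_lt_mul_of_pos_left (kappaMean_strictMonoOn hFc hF ha hb hab) hπ
  · refine ((tendsto_kappaMean_atTop hFc hF).const_mul_atTop hπ).congr' ?_
    filter_upwards [eventually_gt_atTop 0] with s hs
    rw [kappa_eq_kappaMean hf hs]

/-- `κ` satisfies condition (L2): there exists `ρ > 0` with `κ(ρ) = 0`,
`κ` negative on `(0, ρ)` and positive, nondecreasing, unbounded on `(ρ, ∞)`. -/
theorem kappa_condL2 (f : ℝ → ℝ) (hflip : LocallyLipschitz f) (hfe : ∀ s : ℝ, f (-s) = f s)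
    (s₀ : ℝ) (hF : CondL2 (fun s => ∫ σ in (0:ℝ)..s, f σ) s₀) :
    ∃ ρ : ℝ, CondL2 (kappa f) ρ :=
  kappa_condL2_general f hflip s₀ hF
end
end

section
/- For every s ∈ (0, s₀) one has ∫_0^s f(σ) √(1 − σ²/s²) dσ < 0; equivalently κ(s) < 0 on (0, s₀). -/
open Real Set Filter MeasureTheory
open scoped RealInnerProductSpace

noncomputable section

/-!
Substituting `σ = s sin θ` and then integrating by parts against `cos θ` turns the weighted
integral into `∫₀^{π/2} F(s sin θ) sin θ dθ`; for `0 < s < s₀` the integrand is negative on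
`(0, π/2)`.
-/

theorem integral_mul_sqrt_one_sub_sq_div_sq_eq_integral_primitive_mul_sin
    {f : ℝ → ℝ} (hf : Continuous f) (s : ℝ) :
    ∫ σ in (0:ℝ)..s, f σ * √(1 - σ ^ 2 / s ^ 2) =
      ∫ θ in (0:ℝ)..π / 2, (∫ σ in (0:ℝ)..s * sin θ, f σ) * sin θ := by
  have hsin : ∀ θ, HasDerivAt (fun θ => s * sin θ) (s * cos θ) θ :=
    fun θ => (hasDerivAt_sin θ).const_mul s
  have hprim : ∀ θ, HasDerivAt (fun θ => ∫ σ in (0:ℝ)..s * sin θ, f σ)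
      (f (s * sin θ) * (s * cos θ)) θ :=
    fun θ => (hf.integral_hasStrictDerivAt 0 _).hasDerivAt.comp θ (hsin θ)
  calc ∫ σ in (0:ℝ)..s, f σ * √(1 - σ ^ 2 / s ^ 2)
      = ∫ θ in (0:ℝ)..π / 2, f (s * sin θ) * (s * cos θ) * cos θ := by
        have hsubst := intervalIntegral.integral_comp_mul_deriv (a := 0) (b := π / 2)
          (fun θ _ => hsin θ) (by fun_prop)
          (g := fun σ => f σ * √(1 - σ ^ 2 / s ^ 2)) (by fun_prop)
        simp only [sin_zero, mul_zero, sin_pi_div_two, mul_one] at hsubst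
        rw [← hsubst]
        refine intervalIntegral.integral_congr fun θ hθ => ?_
        rw [uIcc_of_le (by positivity)] at hθ
        rcases eq_or_ne s 0 with rfl | hs
        · simp
        have hcos_sq : 1 - (s * sin θ) ^ 2 / s ^ 2 = cos θ ^ 2 := by
          field_simp; linarith [sin_sq_add_cos_sq θ]
        have hcos : 0 ≤ cos θ := cos_nonneg_of_mem_Icc ⟨by linarith [pi_pos, hθ.1], hθ.2⟩
        rw [Function.comp_apply, hcos_sq, sqrt_sq hcos]
        ring
    _ = ∫ θ in (0:ℝ)..π / 2, (∫ σ in (0:ℝ)..s * sin θ, f σ) * sin θ := by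
        have hparts := intervalIntegral.integral_mul_deriv_eq_deriv_mul (a := 0) (b := π / 2)
          (fun θ _ => hprim θ) (fun θ _ => hasDerivAt_cos θ)
          ((by fun_prop : Continuous _).intervalIntegrable _ _)
          (continuous_sin.neg.intervalIntegrable _ _)
        simp only [mul_neg, intervalIntegral.integral_neg, sin_pi_div_two, mul_one, cos_pi_div_two,
          mul_zero, sin_zero, intervalIntegral.integral_same, cos_zero, sub_self, zero_sub,
          neg_inj] at hparts
        exact hparts.symm

theorem kappa_neg_on_Ioo_general (f : ℝ → ℝ) (hf : Continuous f) (s₀ : ℝ)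
    (hF : ∀ s ∈ Set.Ioo (0:ℝ) s₀, (∫ σ in (0:ℝ)..s, f σ) < 0) :
    ∀ s ∈ Set.Ioo (0:ℝ) s₀,
      (∫ σ in (0:ℝ)..s, f σ * Real.sqrt (1 - σ ^ 2 / s ^ 2)) < 0 ∧ kappa f s < 0 := by
  rintro s ⟨hs, hss₀⟩
  have hF_cont : Continuous fun x => ∫ σ in (0:ℝ)..x, f σ :=
    intervalIntegral.continuous_primitive hf.intervalIntegrable 0
  have hneg : ∫ σ in (0:ℝ)..s, f σ * √(1 - σ ^ 2 / s ^ 2) < 0 := by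
    rw [integral_mul_sqrt_one_sub_sq_div_sq_eq_integral_primitive_mul_sin hf, ← neg_pos,
      ← intervalIntegral.integral_neg]
    refine intervalIntegral.intervalIntegral_pos_of_pos_on
      (Continuous.intervalIntegrable (by fun_prop) _ _) (fun θ hθ => ?_) (by positivity)
    have hsin : 0 < sin θ := sin_pos_of_pos_of_lt_pi hθ.1 (by linarith [hθ.2, pi_pos])
    have hF_neg := hF (s * sin θ) ⟨by positivity, by nlinarith [sin_le_one θ]⟩
    nlinarith
  exact ⟨hneg, mul_neg_of_pos_of_neg (by positivity) hneg⟩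

/-- `∫₀ˢ f(σ) √(1 - σ²/s²) dσ < 0` on `(0, s₀)`; equivalently `κ < 0` there. -/
theorem kappa_neg_on_Ioo (f : ℝ → ℝ) (hf : Continuous f) (s₀ : ℝ) (hs₀ : 0 < s₀)
    (hF : ∀ s ∈ Set.Ioo (0:ℝ) s₀, (∫ σ in (0:ℝ)..s, f σ) < 0) :
    ∀ s ∈ Set.Ioo (0:ℝ) s₀,
      (∫ σ in (0:ℝ)..s, f σ * Real.sqrt (1 - σ ^ 2 / s ^ 2)) < 0 ∧ kappa f s < 0 :=
  kappa_neg_on_Ioo_general f hf s₀ hF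
end
end

section
/- For all s > t > s₀ one has ∫_0^s f(σ) √(1 − σ²/s²) dσ > ∫_0^t f(σ) √(1 − σ²/t²) dσ; that is, κ is strictly increasing on (s₀, ∞). -/
open Real Set Filter MeasureTheory
open scoped RealInnerProductSpace

noncomputable section

/-!
Substituting `σ = r sin θ` and integrating by parts against `cos θ` turns
`∫₀ʳ f(σ) √(1 - σ²/r²) dσ` into `∫₀^{π/2} F(r sin θ) sin θ dθ`, where `F` is the primitive of `f`.
Split `F = min F 0 + max F 0`. Under (L2) the positive part is monotone on `[0, ∞)`, so its
contribution is nondecreasing in `r`. The negative part vanishes on `[s₀, ∞)`; substituting back,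
its contribution is `∫₀^{s₀} min (F σ) 0 · σ / (r √(r² - σ²)) dσ`, and since the kernel strictly
decreases in `r` while `F < 0` on `(0, s₀)`, this contribution strictly increases.
-/

lemma integral_mul_sqrt_one_sub_sq_div_sq_eq {f : ℝ → ℝ} (hf : Continuous f) {r : ℝ} (hr : 0 < r) :
    ∫ σ in (0:ℝ)..r, f σ * √(1 - σ ^ 2 / r ^ 2) =
      ∫ θ in (0:ℝ)..(π / 2), (∫ σ in (0:ℝ)..(r * sin θ), f σ) * sin θ := by
  have hsubst := intervalIntegral.integral_comp_mul_deriv (a := 0) (b := π / 2)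
    (f := fun θ => r * sin θ) (fun θ _ => (hasDerivAt_sin θ).const_mul r) (by fun_prop)
    (g := fun σ => f σ * √(1 - σ ^ 2 / r ^ 2)) (by fun_prop)
  rw [sin_zero, sin_pi_div_two, mul_zero, mul_one] at hsubst
  have hprim : ∀ x, HasDerivAt (fun u => ∫ σ in (0:ℝ)..u, f σ) (f x) x :=
    fun x => (hf.integral_hasStrictDerivAt 0 x).hasDerivAt
  have hparts := intervalIntegral.integral_mul_deriv_eq_deriv_mul (a := 0) (b := π / 2)
    (v := fun θ => ∫ σ in (0:ℝ)..(r * sin θ), f σ) (v' := fun θ => f (r * sin θ) * (r * cos θ))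
    (fun θ _ => hasDerivAt_cos θ)
    (fun θ _ => ((hprim _).comp θ ((hasDerivAt_sin θ).const_mul r) :))
    (by apply Continuous.intervalIntegrable; fun_prop)
    (by apply Continuous.intervalIntegrable; fun_prop)
  calc ∫ σ in (0:ℝ)..r, f σ * √(1 - σ ^ 2 / r ^ 2)
      = ∫ θ in (0:ℝ)..(π / 2), cos θ * (f (r * sin θ) * (r * cos θ)) := by
        rw [← hsubst]
        refine intervalIntegral.integral_congr fun θ hθ => ?_
        rw [uIcc_of_le (by positivity)] at hθ
        have hcos : 0 ≤ cos θ := cos_nonneg_of_mem_Icc ⟨by linarith [pi_pos, hθ.1], hθ.2⟩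
        have hsqrt : √(1 - (r * sin θ) ^ 2 / r ^ 2) = cos θ := by
          rw [show 1 - (r * sin θ) ^ 2 / r ^ 2 = cos θ ^ 2 by
            field_simp; nlinarith [sin_sq_add_cos_sq θ], sqrt_sq hcos]
        simp only [Function.comp_apply, hsqrt]
        ring
    _ = ∫ θ in (0:ℝ)..(π / 2), (∫ σ in (0:ℝ)..(r * sin θ), f σ) * sin θ := by
        rw [hparts]
        simp only [cos_pi_div_two, cos_zero, sin_zero, mul_zero, zero_mul,
          intervalIntegral.integral_same, neg_mul, intervalIntegral.integral_neg]
        simp only [mul_comm, sub_zero, sub_neg_eq_add, zero_add]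

lemma le_mul_sin_of_arcsin_div_le {a r θ : ℝ} (ha : 0 ≤ a) (har : a < r)
    (hθ : θ ∈ Icc (arcsin (a / r)) (π / 2)) : a ≤ r * sin θ := by
  have hr : 0 < r := ha.trans_lt har
  have h := (arcsin_le_iff_le_sin ⟨by linarith [div_nonneg ha hr.le], (div_le_one hr).2 har.le⟩
    ⟨by linarith [pi_pos, hθ.1, arcsin_nonneg.2 (div_nonneg ha hr.le)], hθ.2⟩).1 hθ.1
  rwa [div_le_iff₀' hr] at h

lemma integral_comp_mul_sin_mul_sin_eq (g : ℝ → ℝ) {a r : ℝ} (ha : 0 ≤ a) (har : a < r) :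
    ∫ θ in (0:ℝ)..arcsin (a / r), g (r * sin θ) * sin θ =
      ∫ σ in (0:ℝ)..a, g σ * (σ / (r * √(r ^ 2 - σ ^ 2))) := by
  have hr : 0 < r := ha.trans_lt har
  have hα0 : 0 ≤ arcsin (a / r) := arcsin_nonneg.2 (by positivity)
  have hαlt : arcsin (a / r) < π / 2 := arcsin_lt_pi_div_two.2 ((div_lt_one hr).2 har)
  have hsubst := intervalIntegral.integral_comp_mul_deriv_of_deriv_nonneg
    (g := fun σ => g σ * (σ / (r * √(r ^ 2 - σ ^ 2))))
    (f := fun θ => r * sin θ) (f' := fun θ => r * cos θ) (a := 0) (b := arcsin (a / r))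
    (by fun_prop) (fun θ _ => (hasDerivAt_sin θ).const_mul r)
    (fun θ hθ => by
      rw [min_eq_left hα0, max_eq_right hα0] at hθ
      exact mul_nonneg hr.le (cos_nonneg_of_mem_Icc ⟨by linarith [pi_pos, hθ.1], by linarith [hθ.2]⟩))
  rw [sin_zero, mul_zero, sin_arcsin (by linarith [div_nonneg ha hr.le]) ((div_le_one hr).2 har.le),
    mul_div_cancel₀ _ hr.ne'] at hsubst
  rw [← hsubst]
  refine intervalIntegral.integral_congr fun θ hθ => ?_
  rw [uIcc_of_le hα0] at hθ
  have hcos : 0 < cos θ := cos_pos_of_mem_Ioo ⟨by linarith [pi_pos, hθ.1], by linarith [hθ.2]⟩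
  have hsqrt : √(r ^ 2 - (r * sin θ) ^ 2) = r * cos θ := by
    rw [show r ^ 2 - (r * sin θ) ^ 2 = (r * cos θ) ^ 2 by nlinarith [sin_sq_add_cos_sq θ],
      sqrt_sq (by positivity)]
  simp only [Function.comp_apply, hsqrt]
  field_simp

lemma integral_comp_mul_sin_mul_sin_eq_of_eq_zero {g : ℝ → ℝ} (hg : Continuous g) {a r : ℝ}
    (hg_zero : ∀ x, a ≤ x → g x = 0) (ha : 0 ≤ a) (har : a < r) :
    ∫ θ in (0:ℝ)..(π / 2), g (r * sin θ) * sin θ =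
      ∫ σ in (0:ℝ)..a, g σ * (σ / (r * √(r ^ 2 - σ ^ 2))) := by
  have hr : 0 < r := ha.trans_lt har
  have hα : arcsin (a / r) ≤ π / 2 := arcsin_le_pi_div_two _
  have hint : ∀ b c : ℝ, IntervalIntegrable (fun θ => g (r * sin θ) * sin θ) volume b c :=
    fun b c => Continuous.intervalIntegrable (by fun_prop) b c
  have htail : ∫ θ in arcsin (a / r)..(π / 2), g (r * sin θ) * sin θ = 0 := by
    rw [← intervalIntegral.integral_zero]
    refine intervalIntegral.integral_congr fun θ hθ => ?_
    rw [uIcc_of_le hα] at hθ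
    simp [hg_zero _ (le_mul_sin_of_arcsin_div_le ha har hθ)]
  rw [← intervalIntegral.integral_add_adjacent_intervals (hint 0 (arcsin (a / r))) (hint _ _),
    htail, add_zero, integral_comp_mul_sin_mul_sin_eq g ha har]

lemma div_mul_sqrt_sq_sub_sq_lt {σ t s : ℝ} (hσ : 0 < σ) (hσt : σ < t) (hts : t < s) :
    σ / (s * √(s ^ 2 - σ ^ 2)) < σ / (t * √(t ^ 2 - σ ^ 2)) := by
  have hsqrt : 0 < √(t ^ 2 - σ ^ 2) := sqrt_pos.2 (by nlinarith)
  have ht : 0 < t := hσ.trans hσt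
  refine div_lt_div_of_pos_left hσ (by positivity) ?_
  exact mul_lt_mul'' hts (sqrt_lt_sqrt (by nlinarith) (by nlinarith)) (by linarith) hsqrt.le

lemma continuousOn_div_mul_sqrt_sq_sub_sq {a r : ℝ} (ha : 0 ≤ a) (har : a < r) :
    ContinuousOn (fun σ => σ / (r * √(r ^ 2 - σ ^ 2))) (Icc 0 a) := by
  refine continuousOn_id.div (by fun_prop) fun σ hσ => ?_
  have : 0 < √(r ^ 2 - σ ^ 2) := sqrt_pos.2 (by nlinarith [hσ.1, hσ.2])
  have : 0 < r := ha.trans_lt har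
  positivity

lemma integral_comp_mul_sin_mul_sin_lt_of_nonpos {g : ℝ → ℝ} (hg : Continuous g) {a t s : ℝ}
    (hg_nonpos : ∀ x, g x ≤ 0) (hg_zero : ∀ x, a ≤ x → g x = 0) (hg_neg : ∃ c ∈ Ioo 0 a, g c < 0)
    (hat : a < t) (hts : t < s) :
    ∫ θ in (0:ℝ)..(π / 2), g (t * sin θ) * sin θ <
      ∫ θ in (0:ℝ)..(π / 2), g (s * sin θ) * sin θ := by
  obtain ⟨c, hc, hgc⟩ := hg_neg
  have ha : 0 < a := hc.1.trans hc.2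
  rw [integral_comp_mul_sin_mul_sin_eq_of_eq_zero hg hg_zero ha.le hat,
    integral_comp_mul_sin_mul_sin_eq_of_eq_zero hg hg_zero ha.le (hat.trans hts)]
  refine intervalIntegral.integral_lt_integral_of_continuousOn_of_le_of_exists_lt ha
    (hg.continuousOn.mul (continuousOn_div_mul_sqrt_sq_sub_sq ha.le hat))
    (hg.continuousOn.mul (continuousOn_div_mul_sqrt_sq_sub_sq ha.le (hat.trans hts)))
    (fun σ hσ => mul_le_mul_of_nonpos_left
      (div_mul_sqrt_sq_sub_sq_lt hσ.1 (hσ.2.trans_lt hat) hts).le (hg_nonpos σ))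
    ⟨c, Ioo_subset_Icc_self hc, mul_lt_mul_of_neg_left
      (div_mul_sqrt_sq_sub_sq_lt hc.1 (hc.2.trans hat) hts) hgc⟩

lemma integral_comp_mul_sin_mul_sin_le_of_monotoneOn {g : ℝ → ℝ} (hg : Continuous g)
    (hg_mono : MonotoneOn g (Ici 0)) {t s : ℝ} (ht : 0 ≤ t) (hts : t ≤ s) :
    ∫ θ in (0:ℝ)..(π / 2), g (t * sin θ) * sin θ ≤
      ∫ θ in (0:ℝ)..(π / 2), g (s * sin θ) * sin θ := by
  refine intervalIntegral.integral_mono_on (by positivity)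
    (Continuous.intervalIntegrable (by fun_prop) _ _)
    (Continuous.intervalIntegrable (by fun_prop) _ _) fun θ hθ => ?_
  have hsin : 0 ≤ sin θ := sin_nonneg_of_nonneg_of_le_pi hθ.1 (by linarith [pi_pos, hθ.2])
  refine mul_le_mul_of_nonneg_right (hg_mono ?_ ?_ ?_) hsin
  · exact mul_nonneg ht hsin
  · exact mul_nonneg (ht.trans hts) hsin
  · exact mul_le_mul_of_nonneg_right hts hsin

lemma integral_comp_mul_sin_mul_sin_lt {F : ℝ → ℝ} (hF : Continuous F) {s₀ t s : ℝ}
    (hF_nonpos : ∀ x ∈ Icc 0 s₀, F x ≤ 0) (hF_neg : ∃ c ∈ Ioo 0 s₀, F c < 0)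
    (hF_nonneg : ∀ x, s₀ ≤ x → 0 ≤ F x) (hF_mono : MonotoneOn F (Ioi s₀))
    (hs₀t : s₀ < t) (hts : t < s) :
    ∫ θ in (0:ℝ)..(π / 2), F (t * sin θ) * sin θ <
      ∫ θ in (0:ℝ)..(π / 2), F (s * sin θ) * sin θ := by
  obtain ⟨c, hc, hFc⟩ := hF_neg
  have hsplit : ∀ r, ∫ θ in (0:ℝ)..(π / 2), F (r * sin θ) * sin θ =
      (∫ θ in (0:ℝ)..(π / 2), min (F (r * sin θ)) 0 * sin θ) +
        ∫ θ in (0:ℝ)..(π / 2), max (F (r * sin θ)) 0 * sin θ := by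
    intro r
    rw [← intervalIntegral.integral_add (Continuous.intervalIntegrable (by fun_prop) _ _)
      (Continuous.intervalIntegrable (by fun_prop) _ _)]
    simp only [← add_mul, min_add_max, add_zero]
  have hpos_mono : MonotoneOn (fun x => max (F x) 0) (Ici 0) := by
    intro x hx y hy hxy
    by_cases hxs₀ : x ≤ s₀
    · exact (max_eq_right (hF_nonpos x ⟨hx, hxs₀⟩)).trans_le (le_max_right _ _)
    · replace hxs₀ := not_le.1 hxs₀
      exact max_le_max (hF_mono hxs₀ (hxs₀.trans_le hxy) hxy) le_rfl
  have hneg := integral_comp_mul_sin_mul_sin_lt_of_nonpos (g := fun x => min (F x) 0)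
    (by fun_prop) (fun x => min_le_right _ _) (fun x hx => min_eq_right (hF_nonneg x hx))
    ⟨c, hc, min_lt_iff.2 (Or.inl hFc)⟩ hs₀t hts
  have hpos := integral_comp_mul_sin_mul_sin_le_of_monotoneOn (g := fun x => max (F x) 0)
    (by fun_prop) hpos_mono (by linarith [hc.1, hc.2]) hts.le
  rw [hsplit t, hsplit s]
  exact add_lt_add_of_lt_of_le hneg hpos

lemma CondL2.nonpos_of_mem_Icc {F : ℝ → ℝ} {s₀ : ℝ} (hF : CondL2 F s₀) (hF0 : F 0 = 0) {x : ℝ}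
    (hx : x ∈ Icc 0 s₀) : F x ≤ 0 := by
  rcases hx.1.eq_or_lt with rfl | hx0
  · exact hF0.le
  rcases hx.2.eq_or_lt with rfl | hxs₀
  · exact hF.2.1.le
  · exact (hF.2.2.1 x ⟨hx0, hxs₀⟩).le

lemma CondL2.nonneg_of_le_s4 {F : ℝ → ℝ} {s₀ : ℝ} (hF : CondL2 F s₀) {x : ℝ} (hx : s₀ ≤ x) :
    0 ≤ F x :=
  hx.eq_or_lt.elim (fun h => h ▸ hF.2.1.ge) fun h => (hF.2.2.2.1 x h).le

lemma CondL2.exists_neg {F : ℝ → ℝ} {s₀ : ℝ} (hF : CondL2 F s₀) : ∃ c ∈ Ioo 0 s₀, F c < 0 :=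
  ⟨s₀ / 2, ⟨by linarith [hF.1], by linarith [hF.1]⟩,
    hF.2.2.1 _ ⟨by linarith [hF.1], by linarith [hF.1]⟩⟩

/-- for `s > t > s₀`,
`∫₀ˢ f(σ)√(1-σ²/s²) dσ > ∫₀ᵗ f(σ)√(1-σ²/t²) dσ`; i.e. `κ` strictly increases on `(s₀, ∞)`. -/
theorem kappa_strictMonoOn (f : ℝ → ℝ) (hflip : LocallyLipschitz f)
    (s₀ : ℝ) (hF : CondL2 (fun s => ∫ σ in (0:ℝ)..s, f σ) s₀) :
    (∀ s t : ℝ, s₀ < t → t < s →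
      (∫ σ in (0:ℝ)..t, f σ * Real.sqrt (1 - σ ^ 2 / t ^ 2)) <
        ∫ σ in (0:ℝ)..s, f σ * Real.sqrt (1 - σ ^ 2 / s ^ 2)) ∧
    StrictMonoOn (kappa f) (Set.Ioi s₀) := by
  have hf : Continuous f := hflip.continuous
  have hF_cont : Continuous fun s => ∫ σ in (0:ℝ)..s, f σ :=
    intervalIntegral.continuous_primitive (fun _ _ => hf.intervalIntegrable _ _) 0
  have key : ∀ s t : ℝ, s₀ < t → t < s →
      (∫ σ in (0:ℝ)..t, f σ * √(1 - σ ^ 2 / t ^ 2)) <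
        ∫ σ in (0:ℝ)..s, f σ * √(1 - σ ^ 2 / s ^ 2) := by
    intro s t hs₀t hts
    rw [integral_mul_sqrt_one_sub_sq_div_sq_eq hf (hF.1.trans hs₀t),
      integral_mul_sqrt_one_sub_sq_div_sq_eq hf (hF.1.trans (hs₀t.trans hts))]
    exact integral_comp_mul_sin_mul_sin_lt hF_cont
      (fun x hx => hF.nonpos_of_mem_Icc intervalIntegral.integral_same hx) hF.exists_neg
      (fun x => hF.nonneg_of_le_s4) hF.2.2.2.2.1 hs₀t hts
  refine ⟨key, fun t ht s hs hts => ?_⟩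
  exact mul_lt_mul_of_pos_left (key s t ht hts) (by positivity)
end
end

section
/- One has lim_{s→∞} ∫_0^s f(σ) √(1 − σ²/s²) dσ = ∞; that is, κ(s) → ∞ as s → ∞. -/
/-!
Substituting `σ = s sin θ` and integrating by parts (the boundary terms vanish because
`F 0 = 0` and `cos (π / 2) = 0`) gives
`∫₀ˢ f(σ) √(1 - σ²/s²) dσ = ∫₀^{π/2} F(s sin θ) sin θ dθ`,
with `F` the primitive of `f`.
By (L2), `F` is bounded below on `[0, ∞)` by some `m ≤ 0` and nondecreasing beyond `s₀`. On
`[π/6, π/2]` we have `sin θ ≥ 1/2`, so once `s/2 > s₀` the integrand is at least `F(s/2)/2`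
there, and it is at least `m` on `[0, π/6]`. Hence the integral is at least
`(π/6)(m + F(s/2)) → ∞`.
-/

open Real Set Filter MeasureTheory
open scoped RealInnerProductSpace

noncomputable section

theorem integral_mul_sqrt_one_sub_sq_div_sq {f : ℝ → ℝ} (hf : Continuous f) {s : ℝ}
    (hs : s ≠ 0) :
    ∫ σ in (0:ℝ)..s, f σ * √(1 - σ ^ 2 / s ^ 2) =
      ∫ θ in (0:ℝ)..π / 2, (∫ σ in (0:ℝ)..s * sin θ, f σ) * sin θ := by
  set F : ℝ → ℝ := fun x => ∫ σ in (0:ℝ)..x, f σ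
  have hF : ∀ θ, HasDerivAt (fun θ => F (s * sin θ)) (f (s * sin θ) * (s * cos θ)) θ :=
    fun θ => (hf.integral_hasStrictDerivAt 0 _).hasDerivAt.comp θ
      ((hasDerivAt_sin θ).const_mul s)
  have hsub : ∫ σ in (0:ℝ)..s, f σ * √(1 - σ ^ 2 / s ^ 2) =
      ∫ θ in (0:ℝ)..π / 2, cos θ * (f (s * sin θ) * (s * cos θ)) := by
    have := intervalIntegral.integral_comp_mul_deriv (a := 0) (b := π / 2)
      (g := fun σ => f σ * √(1 - σ ^ 2 / s ^ 2))
      (fun θ _ => (hasDerivAt_sin θ).const_mul s) (by fun_prop) (by fun_prop)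
    simp only [sin_zero, mul_zero, sin_pi_div_two, mul_one] at this
    rw [← this]
    refine intervalIntegral.integral_congr fun θ hθ => ?_
    rw [uIcc_of_le (by positivity)] at hθ
    have hcos : √(1 - (s * sin θ) ^ 2 / s ^ 2) = cos θ := by
      rw [mul_pow, mul_div_cancel_left₀ _ (pow_ne_zero 2 hs),
        ← cos_eq_sqrt_one_sub_sin_sq (by linarith [hθ.1, pi_pos]) hθ.2]
    simp only [Function.comp, hcos]
    ring
  rw [hsub, intervalIntegral.integral_mul_deriv_eq_deriv_mul (fun θ _ => hasDerivAt_cos θ)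
    (fun θ _ => hF θ) ((by fun_prop : Continuous _).intervalIntegrable _ _)
    ((by fun_prop : Continuous _).intervalIntegrable _ _)]
  simp [F, ← intervalIntegral.integral_neg, mul_comm]

theorem CondL2.bddBelow_image_Ici {F : ℝ → ℝ} {s₀ : ℝ} (hF : CondL2 F s₀)
    (hc : ContinuousOn F (Icc 0 s₀)) : BddBelow (F '' Ici 0) := by
  obtain ⟨hs₀, -, -, hpos, -⟩ := hF
  rw [← Icc_union_Ioi_eq_Ici hs₀.le, image_union]
  exact (isCompact_Icc.bddBelow_image hc).union
    ⟨0, forall_mem_image.2 fun x hx => (hpos x hx).le⟩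

theorem mul_add_le_integral_comp_mul_sin_mul_sin {G : ℝ → ℝ} {a m s : ℝ} (hc : Continuous G)
    (hm : ∀ x, 0 ≤ x → m ≤ G x) (hm₀ : m ≤ 0) (hmono : MonotoneOn G (Ioi a))
    (hs : 0 ≤ s) (ha : a < s / 2) (hG : 0 ≤ G (s / 2)) :
    π / 6 * (m + G (s / 2)) ≤ ∫ θ in (0:ℝ)..π / 2, G (s * sin θ) * sin θ := by
  have hint : ∀ b c : ℝ, IntervalIntegrable (fun θ => G (s * sin θ) * sin θ) volume b c :=
    (by fun_prop : Continuous _).intervalIntegrable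
  have hnear : π / 6 * m ≤ ∫ θ in (0:ℝ)..π / 6, G (s * sin θ) * sin θ := by
    have := intervalIntegral.integral_mono_on (by positivity) intervalIntegrable_const (hint _ _)
      fun θ (hθ : θ ∈ Icc 0 (π / 6)) => show m ≤ G (s * sin θ) * sin θ by
        have h0 := sin_nonneg_of_nonneg_of_le_pi hθ.1 (by linarith [hθ.2, pi_pos])
        nlinarith [hm _ (mul_nonneg hs h0), sin_le_one θ]
    simpa using this
  have hfar : π / 6 * G (s / 2) ≤ ∫ θ in π / 6..π / 2, G (s * sin θ) * sin θ := by
    have := intervalIntegral.integral_mono_on (by linarith [pi_pos]) intervalIntegrable_const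
      (hint _ _) fun θ (hθ : θ ∈ Icc (π / 6) (π / 2)) =>
        show G (s / 2) / 2 ≤ G (s * sin θ) * sin θ by
          have h6 : 1 / 2 ≤ sin θ := sin_pi_div_six ▸
            sin_le_sin_of_le_of_le_pi_div_two (by linarith [pi_pos]) hθ.2 hθ.1
          have hGs : G (s / 2) ≤ G (s * sin θ) :=
            hmono ha (show a < s * sin θ by nlinarith) (by nlinarith)
          nlinarith
    simp only [intervalIntegral.integral_const, smul_eq_mul] at this
    linarith
  rw [← intervalIntegral.integral_add_adjacent_intervals (hint 0 (π / 6)) (hint _ _)]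
  linarith

theorem tendsto_integral_comp_mul_sin_mul_sin_atTop {G : ℝ → ℝ} {a : ℝ} (hc : Continuous G)
    (hbdd : BddBelow (G '' Ici 0)) (hmono : MonotoneOn G (Ioi a))
    (htop : Tendsto G atTop atTop) :
    Tendsto (fun s => ∫ θ in (0:ℝ)..π / 2, G (s * sin θ) * sin θ) atTop atTop := by
  obtain ⟨m, hm⟩ := hbdd
  have hhalf : Tendsto (fun s : ℝ => G (s / 2)) atTop atTop :=
    htop.comp (tendsto_id.atTop_div_const two_pos)
  refine tendsto_atTop_mono' _ ?_
    ((tendsto_atTop_add_const_left _ (min m 0) hhalf).const_mul_atTop (by positivity : 0 < π / 6))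
  filter_upwards [eventually_ge_atTop 0, eventually_gt_atTop (2 * a),
    hhalf.eventually_ge_atTop 0] with s hs ha hG
  exact mul_add_le_integral_comp_mul_sin_mul_sin hc
    (fun x hx => (min_le_left m 0).trans (hm (mem_image_of_mem G hx))) (min_le_right m 0)
    hmono hs (by linarith) hG

/-- `∫₀ˢ f(σ)√(1-σ²/s²) dσ → ∞` as `s → ∞`; i.e. `κ(s) → ∞`. -/
theorem kappa_tendsto_atTop (f : ℝ → ℝ) (hflip : LocallyLipschitz f)
    (s₀ : ℝ) (hF : CondL2 (fun s => ∫ σ in (0:ℝ)..s, f σ) s₀) :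
    Filter.Tendsto (fun s => ∫ σ in (0:ℝ)..s, f σ * Real.sqrt (1 - σ ^ 2 / s ^ 2))
        Filter.atTop Filter.atTop ∧
    Filter.Tendsto (kappa f) Filter.atTop Filter.atTop := by
  have hf : Continuous f := hflip.continuous
  have hFc : Continuous fun s => ∫ σ in (0:ℝ)..s, f σ :=
    intervalIntegral.continuous_primitive hf.intervalIntegrable 0
  obtain ⟨-, -, -, -, hmono, htop⟩ := id hF
  have hlim := tendsto_integral_comp_mul_sin_mul_sin_atTop hFc
    (hF.bddBelow_image_Ici hFc.continuousOn) hmono htop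
  have key : Tendsto (fun s => ∫ σ in (0:ℝ)..s, f σ * √(1 - σ ^ 2 / s ^ 2)) atTop atTop :=
    hlim.congr' <| (eventually_gt_atTop 0).mono fun s hs =>
      (integral_mul_sqrt_one_sub_sq_div_sq hf hs.ne').symm
  exact ⟨key, key.const_mul_atTop (by positivity)⟩
end
end

section
/- Let γ : ℝ → ℝ be continuous and satisfy (G1) and (G2), and define ρ̄(s) := (1/2π) ∫_0^{2π} γ(s sin φ) sin φ dφ for s ≥ 0. Then ρ̄(s) = 0 for all s ≥ 0 if and only if γ ≡ 0; moreover, if γ ≢ 0 then there exists a class-K function α such that ρ̄(s) ≥ α(s) for all s ≥ 0. -/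
/-!
On `[π/6, π/2]` we have `sin φ ≥ 1/2`, so there `γ(s sin φ) sin φ ≥ α₀(s/2)/2` by the class-K
bound `α₀` of (G2) and the monotonicity of `α₀`, while by (G1) the integrand of `ρ̄(s)` is
nonnegative everywhere. Hence `ρ̄(s) ≥ (1/2π) · (π/3) · α₀(s/2)/2 = α₀(s/2)/12`, a class-K function
of `s`; in particular `ρ̄` cannot vanish identically unless `γ` does.
-/

open Real Set Filter MeasureTheory
open scoped RealInnerProductSpace

noncomputable section

namespace ClassK

variable {α : ℝ → ℝ}

lemma monotoneOn (hα : ClassK α) : MonotoneOn α (Ici 0) := hα.2.2.monotoneOn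

lemma pos (hα : ClassK α) {t : ℝ} (ht : 0 < t) : 0 < α t :=
  hα.2.1 ▸ hα.2.2 self_mem_Ici ht.le ht

lemma nonneg (hα : ClassK α) {t : ℝ} (ht : 0 ≤ t) : 0 ≤ α t :=
  hα.2.1 ▸ hα.monotoneOn self_mem_Ici ht ht

lemma const_mul_comp_mul (hα : ClassK α) {a b : ℝ} (ha : 0 < a) (hb : 0 < b) :
    ClassK (fun s => b * α (a * s)) := by
  have hmaps : MapsTo (a * ·) (Ici 0) (Ici 0) := fun s hs => mul_nonneg ha.le hs
  refine ⟨continuousOn_const.mul (hα.1.comp (continuousOn_const.mul continuousOn_id) hmaps),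
    by simp [hα.2.1], fun s hs t ht hst => ?_⟩
  exact mul_lt_mul_of_pos_left (hα.2.2 (hmaps hs) (hmaps ht) (mul_lt_mul_of_pos_left hst ha)) hb

end ClassK

lemma mul_le_intervalIntegral_of_le_on {f : ℝ → ℝ} {a b c d m : ℝ}
    (hf : IntervalIntegrable f volume a b) (hac : a ≤ c) (hcd : c ≤ d) (hdb : d ≤ b)
    (hf₀ : ∀ x ∈ Icc a b, 0 ≤ f x) (hm : ∀ x ∈ Icc c d, m ≤ f x) :
    (d - c) * m ≤ ∫ x in a..b, f x := by
  have hf₀' : 0 ≤ᵐ[volume.restrict (Ioc a b)] f :=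
    ae_restrict_of_forall_mem measurableSet_Ioc fun x hx => hf₀ x (Ioc_subset_Icc_self hx)
  calc (d - c) * m = ∫ _ in c..d, m := by simp
    _ ≤ ∫ x in c..d, f x :=
      intervalIntegral.integral_mono_on hcd intervalIntegrable_const
        (hf.mono_set (uIcc_subset_uIcc (mem_uIcc_of_le hac (hcd.trans hdb))
          (mem_uIcc_of_le (hac.trans hcd) hdb))) hm
    _ ≤ ∫ x in a..b, f x := intervalIntegral.integral_mono_interval hac hcd hdb hf₀' hf

section Coupling

variable {γ α₀ : ℝ → ℝ}

lemma le_of_classK_le_abs (hG1 : ∀ s : ℝ, 0 ≤ s * γ s) (hle : ∀ s : ℝ, α₀ |s| ≤ |γ s|)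
    {t : ℝ} (ht : 0 < t) : α₀ t ≤ γ t := by
  simpa [abs_of_pos ht, abs_of_nonneg (nonneg_of_mul_nonneg_right (hG1 t) ht)] using hle t

lemma rhobar_integrand_nonneg (hG1 : ∀ s : ℝ, 0 ≤ s * γ s) {s : ℝ} (hs : 0 < s) (φ : ℝ) :
    0 ≤ γ (s * sin φ) * sin φ :=
  nonneg_of_mul_nonneg_right (by nlinarith [hG1 (s * sin φ)]) hs

lemma le_rhobar_of_classK_le_abs (hγ : Continuous γ) (hG1 : ∀ s : ℝ, 0 ≤ s * γ s)
    (hα₀ : ClassK α₀) (hle : ∀ s : ℝ, α₀ |s| ≤ |γ s|) {s : ℝ} (hs : 0 < s) :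
    1 / 12 * α₀ (1 / 2 * s) ≤ rhobar γ s := by
  have hπ := pi_pos
  have hbound : ∀ φ ∈ Icc (π / 6) (π / 2), 1 / 2 * α₀ (1 / 2 * s) ≤ γ (s * sin φ) * sin φ := by
    intro φ hφ
    have hsin : 1 / 2 ≤ sin φ := sin_pi_div_six ▸
      strictMonoOn_sin.monotoneOn ⟨by linarith, by linarith⟩ ⟨by linarith [hφ.1], hφ.2⟩ hφ.1
    have hγ_ge : α₀ (1 / 2 * s) ≤ γ (s * sin φ) :=
      (hα₀.monotoneOn (mem_Ici.2 (by positivity)) (mem_Ici.2 (by nlinarith)) (by nlinarith)).trans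
        (le_of_classK_le_abs hG1 hle (by nlinarith))
    nlinarith [hα₀.nonneg (by positivity : 0 ≤ 1 / 2 * s)]
  have hcont : Continuous fun φ => γ (s * sin φ) * sin φ := by fun_prop
  have hint := mul_le_intervalIntegral_of_le_on (hcont.intervalIntegrable 0 (2 * π))
    (by positivity) (by linarith) (by linarith)
    (fun φ _ => rhobar_integrand_nonneg hG1 hs φ) hbound
  calc 1 / 12 * α₀ (1 / 2 * s) = 1 / (2 * π) * ((π / 2 - π / 6) * (1 / 2 * α₀ (1 / 2 * s))) := by
        field_simp; ring
    _ ≤ rhobar γ s := mul_le_mul_of_nonneg_left hint (by positivity)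

lemma exists_classK_le_rhobar (hγ : Continuous γ) (hG1 : γ 0 = 0 ∧ ∀ s : ℝ, 0 ≤ s * γ s)
    (hα₀ : ClassK α₀) (hle : ∀ s : ℝ, α₀ |s| ≤ |γ s|) :
    ∃ α, ClassK α ∧ ∀ s : ℝ, 0 ≤ s → α s ≤ rhobar γ s := by
  refine ⟨fun s => 1 / 12 * α₀ (1 / 2 * s), hα₀.const_mul_comp_mul (by norm_num) (by norm_num),
    fun s hs => ?_⟩
  rcases hs.eq_or_lt with rfl | hs
  · simp [rhobar, hG1.1, hα₀.2.1]
  · exact le_rhobar_of_classK_le_abs hγ hG1.2 hα₀ hle hs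

end Coupling

/-- `ρ̄ ≡ 0` on `[0, ∞)` iff `γ ≡ 0`; and if `γ ≢ 0` then there is a class-K
function `α` with `ρ̄(s) ≥ α(s)` for all `s ≥ 0`. -/
theorem rhobar_zero_iff_and_classK_lowerBound (γ : ℝ → ℝ) (hγ : Continuous γ)
    (hG1 : γ 0 = 0 ∧ ∀ s : ℝ, 0 ≤ s * γ s)
    (hG2 : (∀ s : ℝ, γ s = 0) ∨ ∃ α, ClassK α ∧ ∀ s : ℝ, α |s| ≤ |γ s|) :
    ((∀ s : ℝ, 0 ≤ s → rhobar γ s = 0) ↔ ∀ s : ℝ, γ s = 0) ∧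
    ((¬ ∀ s : ℝ, γ s = 0) → ∃ α, ClassK α ∧ ∀ s : ℝ, 0 ≤ s → α s ≤ rhobar γ s) := by
  have rhobar_of_zero (h : ∀ s : ℝ, γ s = 0) (s : ℝ) (_ : 0 ≤ s) : rhobar γ s = 0 := by
    simp [rhobar, h]
  rcases hG2 with hzero | ⟨α₀, hα₀, hle⟩
  · exact ⟨⟨fun _ => hzero, rhobar_of_zero⟩, fun hne => absurd hzero hne⟩
  obtain ⟨α, hα, hα_le⟩ := exists_classK_le_rhobar hγ hG1 hα₀ hle
  refine ⟨⟨fun hρ => ?_, rhobar_of_zero⟩, fun _ => ⟨α, hα, hα_le⟩⟩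
  exact absurd (hρ 1 zero_le_one ▸ hα_le 1 zero_le_one) (hα.pos one_pos).not_ge
end
end

section
/- Let g : ℝ^n × ℝ → ℝ^n be locally Lipschitz and satisfy g(x, φ + 2π) = g(x, φ) for all x ∈ ℝ^n and φ ∈ ℝ, and define the average ḡ : ℝ^n → ℝ^n by ḡ(x) := (1/2π) ∫_0^{2π} g(x, φ) dφ. Then for each compact set D ⊂ ℝ^n and each pair of positive real numbers (T, ε) there exists ω* > 0 such that: whenever ω ≥ ω*, x : [0, T] → ℝ^n is a solution of ẋ(t) = g(x(t), ωt), η : [0, T] → ℝ^n is a solution of η̇(t) = ḡ(η(t)), η(0) = x(0), and x(t) ∈ D for all t ∈ [0, T], one has |η(t) − x(t)| ≤ ε for all t ∈ [0, T]. -/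
open Real Set MeasureTheory Function Metric NNReal

noncomputable section

/-!
Write `x' = ḡ(x) - F(t)` with `F(t) = ḡ(x t) - g(x t, ω t)`. Over a window of length `2π/ω` the slow
variable `x` moves by `O(1/ω)`, and with `x` frozen the integral of `F` over the window vanishes
exactly; summing windows gives `‖∫₀ᵗ F‖ = O(1/ω)` on `[0, T]`. Gronwall applied to `η - x - ∫₀ᵗ F`
then bounds `‖η - x‖` by `O(1/ω) e^{LT}` as long as `η` stays in a neighbourhood of `D` on which
`g` is Lipschitz, and a bootstrap argument shows that for large `ω` it never leaves.
-/

section Average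

variable {E F : Type*} [PseudoMetricSpace E] [NormedAddCommGroup F] [NormedSpace ℝ F]

def periodAverage (p : ℝ) (f : ℝ → F) : F := (1 / p) • ∫ φ in (0:ℝ)..p, f φ

lemma norm_periodAverage_le {p C : ℝ} (hp : 0 < p) {f : ℝ → F} (hf : ∀ φ, ‖f φ‖ ≤ C) :
    ‖periodAverage p f‖ ≤ C := by
  have hint : ‖∫ φ in (0:ℝ)..p, f φ‖ ≤ C * p := by
    simpa [abs_of_pos hp] using
      intervalIntegral.norm_integral_le_of_norm_le_const (a := 0) (b := p) fun φ _ => hf φ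
  rw [periodAverage, norm_smul, Real.norm_of_nonneg (by positivity), one_div,
    inv_mul_le_iff₀ hp, mul_comm]
  exact hint

lemma periodAverage_sub {p : ℝ} {f f' : ℝ → F} (hf : IntervalIntegrable f volume 0 p)
    (hf' : IntervalIntegrable f' volume 0 p) :
    periodAverage p f - periodAverage p f' = periodAverage p (f - f') := by
  rw [periodAverage, periodAverage, periodAverage, ← smul_sub,
    ← intervalIntegral.integral_sub hf hf']
  rfl

lemma LipschitzOnWith.periodAverage {G : E → ℝ → F} {K : Set E} {L : ℝ≥0} {p : ℝ} (hp : 0 < p)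
    (hG : ∀ x ∈ K, IntervalIntegrable (G x) volume 0 p)
    (hL : ∀ φ, LipschitzOnWith L (fun x => G x φ) K) :
    LipschitzOnWith L (fun x => periodAverage p (G x)) K := by
  refine LipschitzOnWith.of_dist_le_mul fun x hx y hy => ?_
  rw [dist_eq_norm, periodAverage_sub (hG x hx) (hG y hy)]
  exact norm_periodAverage_le hp fun φ => by
    simpa [dist_eq_norm] using (hL φ).dist_le_mul x hx y hy

lemma Function.Periodic.integral_sub_comp_mul_eq_zero [CompleteSpace F] {f : ℝ → F} {p ω : ℝ}
    (hf : Periodic f p) (hfc : Continuous f) (hp : p ≠ 0) (hω : ω ≠ 0) (a : ℝ) :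
    ∫ s in a..a + p / ω, (periodAverage p f - f (ω * s)) = 0 := by
  have hshift : ω * (a + p / ω) = ω * a + p := by field_simp
  rw [intervalIntegral.integral_sub intervalIntegrable_const
      ((show Continuous fun s => f (ω * s) by fun_prop).intervalIntegrable _ _),
    intervalIntegral.integral_const, intervalIntegral.integral_comp_mul_left _ hω, hshift,
    hf.intervalIntegral_add_eq (ω * a) 0, zero_add, periodAverage, smul_smul, add_sub_cancel_left,
    sub_eq_zero]
  congr 1
  field_simp

end Average

lemma exists_lipschitzOnWith_and_norm_le_of_periodic {E F : Type*} [PseudoMetricSpace E]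
    [SeminormedAddCommGroup F] {G : E → ℝ → F} (hG : LocallyLipschitz (uncurry G)) {p : ℝ}
    (hp : 0 < p) (hper : ∀ x, Periodic (G x) p) {K : Set E} (hK : IsCompact K) :
    ∃ L M : ℝ≥0, (∀ φ, LipschitzOnWith L (fun x => G x φ) K) ∧ ∀ x ∈ K, ∀ φ, ‖G x φ‖ ≤ M := by
  have hQ : IsCompact (K ×ˢ Icc 0 p) := hK.prod isCompact_Icc
  obtain ⟨L, hL⟩ := hG.locallyLipschitzOn.exists_lipschitzOnWith_of_compact hQ
  obtain ⟨M, hM⟩ := hQ.exists_bound_of_continuousOn hG.continuous.continuousOn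
  have hreduce (φ : ℝ) : ∃ ψ ∈ Icc 0 p, (fun x => G x φ) = fun x => G x ψ :=
    have hper' : Periodic (fun φ x => G x φ) p := fun φ => funext fun x => hper x φ
    let ⟨ψ, hψ, h⟩ := hper'.exists_mem_Ico₀ hp φ
    ⟨ψ, Ico_subset_Icc_self hψ, h⟩
  refine ⟨L, M.toNNReal, fun φ => ?_, fun x hx φ => ?_⟩
  · obtain ⟨ψ, hψ, h⟩ := hreduce φ
    rw [h]
    have := hL.comp (LipschitzWith.prodMk_right ψ).lipschitzOnWith fun x hx => ⟨hx, hψ⟩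
    rwa [mul_one] at this
  · obtain ⟨ψ, hψ, h⟩ := hreduce φ
    rw [congrFun h x]
    exact (hM (x, ψ) ⟨hx, hψ⟩).trans (le_coe_toNNReal M)

lemma norm_integral_le_of_norm_integral_window_le {F : Type*} [NormedAddCommGroup F]
    [NormedSpace ℝ F] {f : ℝ → F} (hf : Continuous f) {C δ P a t : ℝ} (hP : 0 < P)
    (hC : ∀ s, ‖f s‖ ≤ C) (hδ : ∀ b, ‖∫ s in b..b + P, f s‖ ≤ δ) (ht : a ≤ t) :
    ‖∫ s in a..t, f s‖ ≤ δ / P * (t - a) + C * P := by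
  have hδ0 : 0 ≤ δ := (norm_nonneg _).trans (hδ 0)
  have hC0 : 0 ≤ C := (norm_nonneg _).trans (hC 0)
  have key (k : ℕ) : ∀ t ∈ Icc (a + k * P) (a + (k + 1) * P),
      ‖∫ s in a..t, f s‖ ≤ k * δ + C * P := by
    induction k with
    | zero =>
      intro t ht
      rw [Nat.cast_zero, zero_mul, add_zero, zero_add, one_mul] at ht
      calc ‖∫ s in a..t, f s‖ ≤ C * |t - a| :=
            intervalIntegral.norm_integral_le_of_norm_le_const fun s _ => hC s
        _ ≤ (0 : ℕ) * δ + C * P := by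
          rw [abs_of_nonneg (by linarith [ht.1]), Nat.cast_zero, zero_mul, zero_add]
          exact mul_le_mul_of_nonneg_left (by linarith [ht.2]) hC0
    | succ k ih =>
      intro t ht
      have hwindow := hδ (t - P)
      rw [sub_add_cancel] at hwindow
      rw [← intervalIntegral.integral_add_adjacent_intervals (hf.intervalIntegrable a (t - P))
        (hf.intervalIntegrable (t - P) t)]
      push_cast at ht ⊢
      calc _ ≤ ‖∫ s in a..t - P, f s‖ + ‖∫ s in t - P..t, f s‖ := norm_add_le _ _
        _ ≤ (k * δ + C * P) + δ :=
            add_le_add (ih (t - P) ⟨by linarith [ht.1], by linarith [ht.2]⟩) hwindow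
        _ = (k + 1) * δ + C * P := by ring
  set k := ⌊(t - a) / P⌋₊
  have hk : (k : ℝ) ≤ (t - a) / P := Nat.floor_le (div_nonneg (sub_nonneg.2 ht) hP.le)
  have hk' : (t - a) / P < k + 1 := Nat.lt_floor_add_one _
  calc _ ≤ k * δ + C * P := key k t ⟨by rw [le_div_iff₀ hP] at hk; linarith,
        by rw [div_lt_iff₀ hP] at hk'; linarith⟩
    _ ≤ δ / P * (t - a) + C * P := by
      rw [div_mul_eq_mul_div, mul_div_assoc, mul_comm δ]
      gcongr

section Oscillation

variable {E F : Type*} [PseudoMetricSpace E] [NormedAddCommGroup F] [NormedSpace ℝ F]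
  {G : E → ℝ → F} {K : Set E} {L M N : ℝ≥0} {p ω : ℝ} {y : ℝ → E}

def averageDeviation (p ω : ℝ) (G : E → ℝ → F) (y : ℝ → E) (s : ℝ) : F :=
  periodAverage p (G (y s)) - G (y s) (ω * s)

lemma continuous_averageDeviation (hG : Continuous (uncurry G))
    (hLbar : LipschitzOnWith L (fun x => periodAverage p (G x)) K) (hy : Continuous y)
    (hyK : ∀ s, y s ∈ K) : Continuous (averageDeviation p ω G y) :=
  (hLbar.continuousOn.comp_continuous hy hyK).sub
    (hG.comp (hy.prodMk (continuous_const_mul ω)))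

lemma norm_integral_averageDeviation_window_le [CompleteSpace F] (hG : Continuous (uncurry G))
    (hper : ∀ x, Periodic (G x) p) (hp : 0 < p) (hω : 0 < ω)
    (hL : ∀ φ, LipschitzOnWith L (fun x => G x φ) K)
    (hLbar : LipschitzOnWith L (fun x => periodAverage p (G x)) K)
    (hy : LipschitzWith N y) (hyK : ∀ s, y s ∈ K) (a : ℝ) :
    ‖∫ s in a..a + p / ω, averageDeviation p ω G y s‖ ≤ 2 * L * N * (p / ω) ^ 2 := by
  set P := p / ω
  have hP : 0 < P := div_pos hp hω
  have hGa := hG.uncurry_left (y a)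
  -- freezing the slow variable at `y a` makes the window integral vanish exactly
  have hfrozen := (hper (y a)).integral_sub_comp_mul_eq_zero hGa hp.ne' hω.ne' a
  have hpoint : ∀ s ∈ uIoc a (a + P), ‖averageDeviation p ω G y s -
      (periodAverage p (G (y a)) - G (y a) (ω * s))‖ ≤ 2 * L * N * P := by
    intro s hs
    rw [uIoc_of_le (by linarith)] at hs
    have hys : dist (y s) (y a) ≤ N * P := by
      refine (hy.dist_le_mul s a).trans (mul_le_mul_of_nonneg_left ?_ N.coe_nonneg)
      rw [Real.dist_eq, abs_of_pos (by linarith [hs.1])]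
      linarith [hs.2]
    have hbar := hLbar.dist_le_mul _ (hyK s) _ (hyK a)
    have hosc := (hL (ω * s)).dist_le_mul _ (hyK a) _ (hyK s)
    rw [dist_eq_norm] at hbar hosc
    rw [dist_comm (y a)] at hosc
    calc _ = ‖(periodAverage p (G (y s)) - periodAverage p (G (y a))) +
          (G (y a) (ω * s) - G (y s) (ω * s))‖ := by
          rw [averageDeviation]; congr 1; abel
      _ ≤ L * dist (y s) (y a) + L * dist (y s) (y a) := norm_add_le_of_le hbar hosc
      _ ≤ 2 * L * N * P := by nlinarith [L.coe_nonneg]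
  have hint : IntervalIntegrable (fun s => periodAverage p (G (y a)) - G (y a) (ω * s))
      volume a (a + P) :=
    (continuous_const.sub (hGa.comp (continuous_const_mul ω))).intervalIntegrable _ _
  calc _ = ‖∫ s in a..a + P, (averageDeviation p ω G y s -
        (periodAverage p (G (y a)) - G (y a) (ω * s)))‖ := by
        rw [intervalIntegral.integral_sub ((continuous_averageDeviation hG hLbar hy.continuous
          hyK).intervalIntegrable _ _) hint, hfrozen, sub_zero]
    _ ≤ 2 * L * N * P * |a + P - a| := intervalIntegral.norm_integral_le_of_norm_le_const hpoint
    _ = 2 * L * N * P ^ 2 := by rw [add_sub_cancel_left, abs_of_pos hP]; ring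

lemma norm_integral_averageDeviation_le [CompleteSpace F] (hG : Continuous (uncurry G))
    (hper : ∀ x, Periodic (G x) p) (hp : 0 < p) (hω : 0 < ω)
    (hL : ∀ φ, LipschitzOnWith L (fun x => G x φ) K)
    (hLbar : LipschitzOnWith L (fun x => periodAverage p (G x)) K)
    (hM : ∀ x ∈ K, ∀ φ, ‖G x φ‖ ≤ M) (hy : LipschitzWith N y) (hyK : ∀ s, y s ∈ K)
    {t : ℝ} (ht : 0 ≤ t) :
    ‖∫ s in (0:ℝ)..t, averageDeviation p ω G y s‖ ≤ 2 * (p / ω) * (L * N * t + M) := by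
  have hP : 0 < p / ω := div_pos hp hω
  have hC (s : ℝ) : ‖averageDeviation p ω G y s‖ ≤ 2 * M :=
    (norm_sub_le _ _).trans <| by
      linarith [norm_periodAverage_le hp (hM _ (hyK s)), hM _ (hyK s) (ω * s)]
  calc _ ≤ 2 * L * N * (p / ω) ^ 2 / (p / ω) * (t - 0) + 2 * M * (p / ω) :=
        norm_integral_le_of_norm_integral_window_le
          (continuous_averageDeviation hG hLbar hy.continuous hyK) hP hC
          (norm_integral_averageDeviation_window_le hG hper hp hω hL hLbar hy hyK) ht
    _ = 2 * (p / ω) * (L * N * t + M) := by field_simp; ring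

end Oscillation

lemma gronwallBound_zero_mul (K B x : ℝ) :
    gronwallBound 0 K (K * B) x = B * (exp (K * x) - 1) := by
  rcases eq_or_ne K 0 with rfl | hK
  · simp [gronwallBound_K0]
  · rw [gronwallBound_of_K_ne_0 hK]
    field_simp
    ring

/-- `z = u - v - ∫ F` has derivative `V u - V v`, so Gronwall applies to it with forcing `L * B`. -/
lemma norm_sub_le_of_norm_integral_perturbation_le {E : Type*} [NormedAddCommGroup E]
    [NormedSpace ℝ E] [CompleteSpace E] {V : E → E} {K : Set E} {L : ℝ≥0}
    (hV : LipschitzOnWith L V K) {u v F : ℝ → E} (hF : Continuous F) {a b B : ℝ}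
    (hu : ∀ t ∈ Icc a b, HasDerivAt u (V (u t)) t)
    (hv : ∀ t ∈ Icc a b, HasDerivAt v (V (v t) - F t) t)
    (huK : ∀ t ∈ Icc a b, u t ∈ K) (hvK : ∀ t ∈ Icc a b, v t ∈ K) (h0 : u a = v a)
    (hB : ∀ t ∈ Icc a b, ‖∫ s in a..t, F s‖ ≤ B) :
    ∀ t ∈ Icc a b, ‖u t - v t‖ ≤ B * exp (L * (t - a)) := by
  set z := fun t => u t - v t - ∫ s in a..t, F s
  have hz (t : ℝ) (ht : t ∈ Icc a b) : HasDerivAt z (V (u t) - V (v t)) t :=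
    (((hu t ht).sub (hv t ht)).sub
      (hF.integral_hasStrictDerivAt a t).hasDerivAt).congr_deriv (by abel)
  have hsplit (t : ℝ) (ht : t ∈ Icc a b) : ‖u t - v t‖ ≤ ‖z t‖ + B := by
    calc ‖u t - v t‖ = ‖z t + ∫ s in a..t, F s‖ := by simp only [z, sub_add_cancel]
      _ ≤ ‖z t‖ + B := norm_add_le_of_le le_rfl (hB t ht)
  have hgronwall := norm_le_gronwallBound_of_norm_deriv_right_le (δ := 0)
    (fun t ht => (hz t ht).continuousAt.continuousWithinAt)
    (fun t ht => (hz t (Ico_subset_Icc_self ht)).hasDerivWithinAt)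
    (by simp [z, h0]) fun t ht => by
      have ht' := Ico_subset_Icc_self ht
      calc ‖V (u t) - V (v t)‖ ≤ L * ‖u t - v t‖ := hV.norm_sub_le (huK t ht') (hvK t ht')
        _ ≤ L * ‖z t‖ + L * B := by
          nlinarith [hsplit t ht', L.coe_nonneg]
  intro t ht
  have := hgronwall t ht
  rw [gronwallBound_zero_mul] at this
  linarith [hsplit t ht]

lemma ContinuousOn.le_of_bootstrap {f : ℝ → ℝ} {a b c d : ℝ} (hf : ContinuousOn f (Icc a b))
    (hcd : c < d) (ha : f a ≤ d) (h : ∀ τ ∈ Icc a b, (∀ s ∈ Icc a τ, f s ≤ d) → f τ ≤ c) :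
    ∀ t ∈ Icc a b, f t ≤ c := by
  by_contra! ⟨t₀, ht₀, hlt⟩
  have hfa : f a ≤ c := h a (left_mem_Icc.2 (ht₀.1.trans ht₀.2)) fun s hs => by
    rwa [le_antisymm hs.2 hs.1]
  set c' := min d (f t₀)
  set Z := Icc a b ∩ f ⁻¹' Ici c'
  have hZ : IsCompact Z := isCompact_Icc.of_isClosed_subset
    (hf.preimage_isClosed_of_isClosed isClosed_Icc isClosed_Ici) inter_subset_left
  have hZne : Z.Nonempty := ⟨t₀, ht₀, min_le_right d (f t₀)⟩
  -- the first time `f` reaches `c'`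
  set τ := sInf Z
  have hτ : τ ∈ Z := hZ.sInf_mem hZne
  have hcc' : c < c' := lt_min hcd hlt
  have haτ : a < τ := hτ.1.1.lt_of_ne fun hτa => (hfa.trans_lt hcc').not_ge (hτa ▸ hτ.2)
  have hbelow : ∀ s ∈ Ico a τ, f s ≤ c' := fun s hs => by
    by_contra! hs'
    exact not_le.2 hs.2 (csInf_le hZ.bddBelow ⟨⟨hs.1, hs.2.le.trans hτ.1.2⟩, hs'.le⟩)
  have hτc' : f τ ≤ c' := ContinuousWithinAt.closure_le
    (by rw [closure_Ico haτ.ne]; exact right_mem_Icc.2 haτ.le)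
    ((hf τ hτ.1).mono (Ico_subset_Icc_self.trans (Icc_subset_Icc le_rfl hτ.1.2)))
    continuousWithinAt_const hbelow
  have hτc : f τ ≤ c := h τ hτ.1 fun s hs => by
    rcases hs.2.lt_or_eq with hsτ | rfl
    · exact (hbelow s ⟨hs.1, hsτ⟩).trans (min_le_left _ _)
    · exact hτc'.trans (min_le_left _ _)
  exact absurd (hτc.trans_lt hcc') (not_lt.2 hτ.2)

lemma norm_sub_le_of_averaging {E : Type*} [NormedAddCommGroup E] [NormedSpace ℝ E]
    [CompleteSpace E] {G : E → ℝ → E} {K : Set E} {L M : ℝ≥0} {p ω T : ℝ}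
    (hG : Continuous (uncurry G)) (hper : ∀ x, Periodic (G x) p) (hp : 0 < p) (hω : 0 < ω)
    (hL : ∀ φ, LipschitzOnWith L (fun x => G x φ) K) (hM : ∀ x ∈ K, ∀ φ, ‖G x φ‖ ≤ M)
    (hT : 0 ≤ T) {x η : ℝ → E} (hx : ∀ t ∈ Icc 0 T, HasDerivAt x (G (x t) (ω * t)) t)
    (hη : ∀ t ∈ Icc 0 T, HasDerivAt η (periodAverage p (G (η t))) t) (h0 : η 0 = x 0)
    (hxK : ∀ t ∈ Icc 0 T, x t ∈ K) (hηK : ∀ t ∈ Icc 0 T, η t ∈ K) :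
    ∀ t ∈ Icc 0 T, ‖η t - x t‖ ≤ 2 * (p / ω) * (L * M * T + M) * exp (L * T) := by
  have hLbar := LipschitzOnWith.periodAverage hp
    (fun x _ => (hG.uncurry_left x).intervalIntegrable _ _) hL
  -- extend `x` constantly outside `[0, T]`, so that it is `M`-Lipschitz on all of `ℝ`
  set y := fun s => x (projIcc 0 T hT s)
  have hxy (t : ℝ) (ht : t ∈ Icc 0 T) : y t = x t := by simp [y, projIcc_of_mem hT ht]
  have hyK (s : ℝ) : y s ∈ K := hxK _ (projIcc 0 T hT s).2
  have hy : LipschitzWith M y := by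
    have hxLip : LipschitzOnWith M x (Icc 0 T) :=
      (convex_Icc 0 T).lipschitzOnWith_of_nnnorm_hasDerivWithin_le
        (fun t ht => (hx t ht).hasDerivWithinAt) fun t ht => hM _ (hxK t ht) _
    refine LipschitzWith.of_dist_le_mul fun s t => (hxLip.dist_le_mul _ (projIcc 0 T hT s).2 _
      (projIcc 0 T hT t).2).trans ?_
    gcongr
    simpa [Subtype.dist_eq] using (LipschitzWith.projIcc hT).dist_le_mul s t
  have hx' (t : ℝ) (ht : t ∈ Icc 0 T) :
      HasDerivAt x (periodAverage p (G (x t)) - averageDeviation p ω G y t) t := by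
    simpa [averageDeviation, hxy t ht] using hx t ht
  intro t ht
  calc ‖η t - x t‖ ≤ 2 * (p / ω) * (L * M * T + M) * exp (L * (t - 0)) :=
        norm_sub_le_of_norm_integral_perturbation_le hLbar
          (continuous_averageDeviation hG hLbar hy.continuous hyK) hη hx' hηK hxK h0
          (fun s hs => (norm_integral_averageDeviation_le hG hper hp hω hL hLbar hM hy hyK
            hs.1).trans (by gcongr; exact hs.2)) t ht
    _ ≤ 2 * (p / ω) * (L * M * T + M) * exp (L * T) := by
        rw [sub_zero]; gcongr; exact ht.2

/-- the averaging lemma. For locally Lipschitz `g : ℝⁿ × ℝ → ℝⁿ`,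
`2π`-periodic in its second argument, with average `ḡ(x) = (1/2π) ∫₀^{2π} g(x, φ) dφ`:
for each compact `D` and `T, ε > 0` there is `ω* > 0` such that for `ω ≥ ω*`, solutions of
`ẋ = g(x, ωt)` and `η̇ = ḡ(η)` with `η(0) = x(0)` and `x(t) ∈ D` on `[0, T]` satisfy
`|η(t) - x(t)| ≤ ε` on `[0, T]`. -/
theorem averaging_closeness (n : ℕ)
    (g : EuclideanSpace ℝ (Fin n) → ℝ → EuclideanSpace ℝ (Fin n))
    (hg : LocallyLipschitz (fun p : EuclideanSpace ℝ (Fin n) × ℝ => g p.1 p.2))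
    (hper : ∀ (x : EuclideanSpace ℝ (Fin n)) (φ : ℝ), g x (φ + 2 * π) = g x φ)
    (D : Set (EuclideanSpace ℝ (Fin n))) (hD : IsCompact D)
    (T ε : ℝ) (hT : 0 < T) (hε : 0 < ε) :
    ∃ ωs : ℝ, 0 < ωs ∧ ∀ ω : ℝ, ωs ≤ ω →
      ∀ x η : ℝ → EuclideanSpace ℝ (Fin n),
        (∀ t ∈ Set.Icc (0:ℝ) T, HasDerivAt x (g (x t) (ω * t)) t) →
        (∀ t ∈ Set.Icc (0:ℝ) T,
          HasDerivAt η ((1 / (2 * π)) • ∫ φ in (0:ℝ)..(2 * π), g (η t) φ) t) →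
        η 0 = x 0 → (∀ t ∈ Set.Icc (0:ℝ) T, x t ∈ D) →
        ∀ t ∈ Set.Icc (0:ℝ) T, ‖η t - x t‖ ≤ ε := by
  obtain ⟨L, M, hL, hM⟩ := exists_lipschitzOnWith_and_norm_le_of_periodic hg two_pi_pos hper
    (hD.cthickening (r := ε))
  have hωs : 0 < 8 * π * (L * M * T + M + 1) * exp (L * T) / ε := by positivity
  refine ⟨_, hωs, fun ω hω x η hx hη h0 hxD => ?_⟩
  have hω0 : 0 < ω := hωs.trans_le hω
  have hAω : 2 * (2 * π / ω) * (L * M * T + M) * exp (L * T) ≤ ε / 2 := by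
    rw [div_le_iff₀ hε] at hω
    calc _ ≤ 2 * (2 * π / ω) * (L * M * T + M + 1) * exp (L * T) := by
          gcongr 2 * (2 * π / ω) * ?_ * _; linarith
      _ = 4 * π * (L * M * T + M + 1) * exp (L * T) / ω := by ring
      _ ≤ ε / 2 := by rw [div_le_iff₀ hω0]; linarith
  have hstep (τ : ℝ) (hτ : τ ∈ Icc 0 T) (hclose : ∀ s ∈ Icc 0 τ, ‖η s - x s‖ ≤ ε) :
      ‖η τ - x τ‖ ≤ ε / 2 := by
    have hsub : Icc 0 τ ⊆ Icc 0 T := Icc_subset_Icc le_rfl hτ.2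
    refine (norm_sub_le_of_averaging hg.continuous hper two_pi_pos hω0 hL hM hτ.1
      (fun t ht => hx t (hsub ht)) (fun t ht => hη t (hsub ht)) h0
      (fun t ht => self_subset_cthickening D (hxD t (hsub ht)))
      (fun t ht => mem_cthickening_of_dist_le _ _ ε D (hxD t (hsub ht))
        (by rw [dist_eq_norm]; exact hclose t ht)) τ (right_mem_Icc.2 hτ.1)).trans
      (hAω.trans' ?_)
    gcongr <;> exact hτ.2
  intro t ht
  exact (ContinuousOn.le_of_bootstrap
    (fun t ht => ((hη t ht).continuousAt.sub (hx t ht).continuousAt).norm.continuousWithinAt)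
    (half_lt_self hε) (by simp [h0, hε.le]) hstep t ht).trans (half_le_self hε.le)
end
end
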